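/- arXiv:2404.06778 — 3 statements merged into one kernel-verified Lean document; each statement's English description precedes it below -/
import Mathlib

section
/- Let b ≥ 2 be an integer and let φ : ℝ → ℝ^d be a non-constant ℤ-periodic C^3 function. Then p′(φ,b) < d, and there exist only finitely many λ ∈ (1/b, 1) with q′(φ,λ,b) > p′(φ,b). -/
open MeasureTheory Filter Metric Set Function
open scoped ENNReal NNReal Topology

noncomputable section

namespace Weier

/-- `ℝ^d` as a Euclidean space. -/
abbrev Ed (d : ℕ) : Type := EuclideanSpace ℝ (Fin d)

/-- The Weierstrass-type function `W^φ_{λ,b}(x) = ∑ λ^n φ(b^n x)`. -/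
def Wf {E : Type} [NormedAddCommGroup E] [NormedSpace ℝ E]
    (b : ℕ) (lam : ℝ) (φ : ℝ → E) (x : ℝ) : E :=
  ∑' n : ℕ, lam ^ n • φ ((b : ℝ) ^ n * x)

/-- The graph of `W` over `[0,1)`, as a subset of `ℝ × ℝ^d = ℝ^{1+d}`. -/
def graphW {E : Type} [NormedAddCommGroup E] [NormedSpace ℝ E]
    (b : ℕ) (lam : ℝ) (φ : ℝ → E) : Set (ℝ × E) :=
  (fun x => (x, Wf b lam φ x)) '' Set.Ico (0 : ℝ) 1

/-- Minimal number of `ε`-balls needed to cover `E`. -/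
def coverNum {X : Type} [PseudoMetricSpace X] (E : Set X) (ε : ℝ) : ℕ :=
  sInf {n : ℕ | ∃ s : Finset X, s.card = n ∧ E ⊆ ⋃ x ∈ s, Metric.ball x ε}

/-- `E` has box (Minkowski) dimension `D`. -/
def HasBoxDim {X : Type} [PseudoMetricSpace X] (E : Set X) (D : ℝ) : Prop :=
  Tendsto (fun ε : ℝ => Real.log (coverNum E ε) / Real.log (1 / ε)) (𝓝[>] (0 : ℝ)) (𝓝 D)

/-- The upper box dimension of `E`. -/
def upperBoxDim {X : Type} [PseudoMetricSpace X] (E : Set X) : ℝ :=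
  limsup (fun ε : ℝ => Real.log (coverNum E ε) / Real.log (1 / ε)) (𝓝[>] (0 : ℝ))

/-- Orthogonal projection onto a subspace `V`, as a self-map of the ambient space. -/
def projS {d : ℕ} (V : Submodule ℝ (Ed d)) (x : Ed d) : Ed d :=
  (V.orthogonalProjectionOnto x : Ed d)

/-- `q(φ,λ,b)`: the maximal dimension of a subspace `V ≤ ℝ^d` such that
`π_V ∘ W^φ_{λ,b}` is Lipschitz. -/
def qval (d b : ℕ) (lam : ℝ) (φ : ℝ → Ed d) : ℕ :=
  sSup {n : ℕ | ∃ V : Submodule ℝ (Ed d), Module.finrank ℝ V = n ∧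
    ∃ K : ℝ≥0, LipschitzWith K fun x => projS V (Wf b lam φ x)}

/-- `p(φ,b) = min_{λ ∈ (1/b,1)} q(φ,λ,b)`. -/
def pval (d b : ℕ) (φ : ℝ → Ed d) : ℕ :=
  sInf {n : ℕ | ∃ lam ∈ Set.Ioo (1 / (b : ℝ)) 1, qval d b lam φ = n}

/-- `Y^φ_{λ,b}(x,𝐣) = -∑_{n≥1} γ^n φ'((x + j₁ + j₂ b + ⋯ + j_n b^{n-1})/b^n)`
with `γ = 1/(bλ)`; here `j k` stands for `j_{k+1}`. -/
def Yf {E : Type} [NormedAddCommGroup E] [NormedSpace ℝ E]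
    (b : ℕ) (lam : ℝ) (φ : ℝ → E) (x : ℝ) (j : ℕ → Fin b) : E :=
  -∑' n : ℕ, (1 / ((b : ℝ) * lam)) ^ (n + 1) •
      deriv φ ((x + ∑ k ∈ Finset.range (n + 1), ((j k : ℕ) : ℝ) * (b : ℝ) ^ k) / (b : ℝ) ^ (n + 1))

/-- Condition (H*): all the functions `Y(·,𝐣)`, `𝐣 ∈ Σ`, coincide. -/
def CondHstar {E : Type} [NormedAddCommGroup E] [NormedSpace ℝ E]
    (b : ℕ) (lam : ℝ) (φ : ℝ → E) : Prop :=
  ∀ i j : ℕ → Fin b, ∀ x : ℝ, Yf b lam φ x i = Yf b lam φ x j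

/-- Condition (H) for `φ : ℝ → ℝ^d`: for every one-dimensional subspace `A` and all
`𝐢 ≠ 𝐣`, the function `Y^{π_A φ}(·,𝐢) - Y^{π_A φ}(·,𝐣)` is not identically zero. -/
def CondH (d b : ℕ) (lam : ℝ) (φ : ℝ → Ed d) : Prop :=
  ∀ A : Submodule ℝ (Ed d), Module.finrank ℝ A = 1 →
    ∀ i j : ℕ → Fin b, i ≠ j →
      ¬ ∀ x : ℝ, Yf b lam (fun t => projS A (φ t)) x i = Yf b lam (fun t => projS A (φ t)) x j

/-- Condition (H) in the one-dimensional (real-valued) case. -/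
def CondH1 (b : ℕ) (lam : ℝ) (φ : ℝ → ℝ) : Prop :=
  ∀ i j : ℕ → Fin b, i ≠ j → ¬ ∀ x : ℝ, Yf b lam φ x i = Yf b lam φ x j

/-- `q'(φ,λ,b)`: the maximal dimension of a subspace `V ≤ ℝ^d` such that `π_V φ`
satisfies condition (H*). -/
def q'val (d b : ℕ) (lam : ℝ) (φ : ℝ → Ed d) : ℕ :=
  sSup {n : ℕ | ∃ V : Submodule ℝ (Ed d), Module.finrank ℝ V = n ∧
    CondHstar b lam fun x => projS V (φ x)}

/-- `p'(φ,b) = min_{λ ∈ (1/b,1)} q'(φ,λ,b)`. -/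
def p'val (d b : ℕ) (φ : ℝ → Ed d) : ℕ :=
  sInf {n : ℕ | ∃ lam ∈ Set.Ioo (1 / (b : ℝ)) 1, q'val d b lam φ = n}

/-- The lift `μ` of Lebesgue measure on `[0,1)` to the graph of `W`. -/
def muW (d b : ℕ) (lam : ℝ) (φ : ℝ → Ed d) : Measure (ℝ × Ed d) :=
  Measure.map (fun x => (x, Wf b lam φ x)) (volume.restrict (Set.Ico (0 : ℝ) 1))

/-- `Γ_𝐣(x) = ∫₀ˣ Y(t,𝐣) dt`. -/
def Gam {E : Type} [NormedAddCommGroup E] [NormedSpace ℝ E]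
    (b : ℕ) (lam : ℝ) (φ : ℝ → E) (j : ℕ → Fin b) (x : ℝ) : E :=
  ∫ t in (0 : ℝ)..x, Yf b lam φ t j

/-- The flow projection `π_𝐣(x,y) = y - Γ_𝐣(x)`. -/
def pj {E : Type} [NormedAddCommGroup E] [NormedSpace ℝ E] [CompleteSpace E]
    (b : ℕ) (lam : ℝ) (φ : ℝ → E) (j : ℕ → Fin b) (p : ℝ × E) : E :=
  p.2 - Gam b lam φ j p.1

/-- `ν` is the Bernoulli product on `Σ = Λ^{ℤ₊}` of the uniform measure on `Λ = {0,…,b-1}`: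
it is a probability measure giving every cylinder of length `n` measure `b^{-n}`. -/
def IsBernoulli (b : ℕ) (ν : Measure (ℕ → Fin b)) : Prop :=
  IsProbabilityMeasure ν ∧
    ∀ (n : ℕ) (w : Fin n → Fin b), ν {j | ∀ k : Fin n, j (k : ℕ) = w k} = (1 / (b : ℝ≥0∞)) ^ n

/-- A measure is exact dimensional with dimension `β` if
`log ω(B(x,r))/log r → β` as `r → 0⁺` for `ω`-a.e. `x`. -/
def IsExactDim {X : Type} [PseudoMetricSpace X] [MeasurableSpace X]
    (ω : Measure X) (β : ℝ) : Prop :=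
  ∀ᵐ x ∂ω, Tendsto (fun r : ℝ => Real.log (ω (Metric.ball x r)).toReal / Real.log r)
    (𝓝[>] (0 : ℝ)) (𝓝 β)

/-- The level-`n` `b`-adic cell of `ℝ^d` with index `k`. -/
def bcell (d b n : ℕ) (k : Fin d → ℤ) : Set (Ed d) :=
  {x | ∀ i, (k i : ℝ) / (b : ℝ) ^ n ≤ x i ∧ x i < ((k i : ℝ) + 1) / (b : ℝ) ^ n}

/-- The entropy `H(ω, ℒ_n)` (with logarithms in base `b`) of a measure with respect to
the level-`n` `b`-adic partition of `ℝ^d`. -/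
def entH (d b n : ℕ) (ω : Measure (Ed d)) : ℝ :=
  ∑' k : Fin d → ℤ, -((ω (bcell d b n k)).toReal * Real.logb b (ω (bcell d b n k)).toReal)

/-- The level-`i` `b`-adic cell containing `x`. -/
def cellOf (d b i : ℕ) (x : Ed d) : Set (Ed d) :=
  bcell d b i fun t => ⌊x t * (b : ℝ) ^ i⌋

/-- The component measure `ω_{x,i}`: the normalized restriction of `ω` to the level-`i`
`b`-adic cell containing `x`. -/
def compMeas (d b i : ℕ) (ω : Measure (Ed d)) (x : Ed d) : Measure (Ed d) :=
  (ω (cellOf d b i x))⁻¹ • ω.restrict (cellOf d b i x)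

/-- `ω` is `(V,ε,m)`-saturated. -/
def Saturated (d b : ℕ) (ω : Measure (Ed d)) (V : Submodule ℝ (Ed d)) (ε : ℝ) (m : ℕ) : Prop :=
  (1 / (m : ℝ)) * entH d b m ω ≥
    (1 / (m : ℝ)) * entH d b m (Measure.map (projS Vᗮ) ω) + (Module.finrank ℝ V : ℝ) - ε

/-- `ω` is `(V,ε)`-concentrated: some translate `V + y` of `V` carries `1-ε` of the mass
of `ω` within distance `ε`. -/
def Concentrated (d : ℕ) (ω : Measure (Ed d)) (V : Submodule ℝ (Ed d)) (ε : ℝ) : Prop :=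
  ∃ y : Ed d, 1 - ε ≤ (ω {z | ∃ v ∈ V, dist z (v + y) ≤ ε}).toReal

/-- The local inverse branch `g_i(x,y) = ((x+i)/b, λ y + φ((x+i)/b))`. -/
def gmap {E : Type} [NormedAddCommGroup E] [NormedSpace ℝ E]
    (b : ℕ) (lam : ℝ) (φ : ℝ → E) (i : Fin b) (p : ℝ × E) : ℝ × E :=
  ((p.1 + (i : ℕ)) / (b : ℝ), lam • p.2 + φ ((p.1 + (i : ℕ)) / (b : ℝ)))

/-- `g_𝐢 = g_{i₁} ∘ ⋯ ∘ g_{i_n}` for a finite word `𝐢 = [i₁,…,i_n]`. -/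
def gword {E : Type} [NormedAddCommGroup E] [NormedSpace ℝ E]
    (b : ℕ) (lam : ℝ) (φ : ℝ → E) (l : List (Fin b)) : ℝ × E → ℝ × E :=
  l.foldr (fun i f => gmap b lam φ i ∘ f) id

/-- Concatenation of a finite word with an infinite word. -/
def wcat {b : ℕ} (l : List (Fin b)) (j : ℕ → Fin b) : ℕ → Fin b :=
  fun k => if h : k < l.length then l.get ⟨k, h⟩ else j (k - l.length)

/-- The `m`-th Fourier coefficient `a_m(ψ) = ∫₀¹ ψ(x) e^{-2πimx} dx` of a
`ℤ`-periodic function `ψ : ℝ → ℝ`. -/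
def fCoeff (ψ : ℝ → ℝ) (m : ℤ) : ℂ :=
  ∫ x in (0 : ℝ)..1, (ψ x : ℂ) * Complex.exp (-(2 * (Real.pi : ℂ) * Complex.I * (m : ℂ) * (x : ℂ)))

/-- `tEnum b k` is `t_{k+1}`, where `t₁ < t₂ < ⋯` enumerates the positive integers
not divisible by `b`. -/
def tEnum (b : ℕ) (k : ℕ) : ℕ :=
  Nat.nth (fun t => 0 < t ∧ ¬ b ∣ t) k

/-- The vector `(R_{1,k+1}(λ),…,R_{d,k+1}(λ))` of real parts. -/
def Rvec (d b : ℕ) (lam : ℝ) (φ : ℝ → Ed d) (k : ℕ) : Ed d :=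
  (EuclideanSpace.equiv (Fin d) ℝ).symm fun j =>
    ∑' n : ℕ, (fCoeff (fun x => φ x j) ((tEnum b k : ℤ) * (b : ℤ) ^ n)).re * lam⁻¹ ^ n

/-- The vector `(I_{1,k+1}(λ),…,I_{d,k+1}(λ))` of imaginary parts. -/
def Ivec (d b : ℕ) (lam : ℝ) (φ : ℝ → Ed d) (k : ℕ) : Ed d :=
  (EuclideanSpace.equiv (Fin d) ℝ).symm fun j =>
    ∑' n : ℕ, (fCoeff (fun x => φ x j) ((tEnum b k : ℤ) * (b : ℤ) ^ n)).im * lam⁻¹ ^ n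

/-- `Ker A_{λ,m} = {y : yA_{λ,m} = 0}`, i.e. the vectors orthogonal to the first `m`
columns `R_{·,1},…,R_{·,m}` and `I_{·,1},…,I_{·,m}`. -/
def kerA (d b : ℕ) (lam : ℝ) (φ : ℝ → Ed d) (m : ℕ) : Submodule ℝ (Ed d) :=
  ⨅ k ∈ Finset.range m,
    (LinearMap.ker (innerSL ℝ (Rvec d b lam φ k) : Ed d →ₗ[ℝ] ℝ) ⊓ LinearMap.ker (innerSL ℝ (Ivec d b lam φ k) : Ed d →ₗ[ℝ] ℝ))

/-- The `C^r` norm `‖f‖_r = ∑_{k=0}^r ‖f^{(k)}‖_∞`. -/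
def cnorm (d r : ℕ) (f : ℝ → Ed d) : ℝ :=
  ∑ k ∈ Finset.range (r + 1), ⨆ x : ℝ, ‖iteratedDeriv k f x‖

/-! Write `γ = 1/(bλ)`. Then `Y(x,𝐢) - Y(x,𝐣) = -γ ∑ₙ γⁿ cₙ`, where `cₙ` is the difference of `φ'`
at the `n`-th points sampled along `𝐢` and along `𝐣`, and (H*) for `π_V φ` says exactly that `V`
is orthogonal to the span `S_λ` of all these differences, so `q'(φ,λ,b) = d - dim S_λ`
and `p'(φ,b) = d - R` with `R = max_λ dim S_λ`.

If `𝐢` and `𝐣` agree from some index on, the coefficients decay like `b⁻ⁿ` because `φ'` is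
Lipschitz, so the difference extends analytically in `γ` to the disc of radius `b`. Since `Y` is
continuous in `𝐣`, such differences already span `S_λ`. Take `R` independent ones at a maximizing
`λ₀`: their Gram determinant is analytic in `γ` on a neighbourhood of `[1/b, 1]` and nonzero at
`γ₀`, so it has finitely many zeros there, and every `λ` with `dim S_λ < R` produces one.

Finally `R > 0`. Otherwise the difference for `𝐢 = 000…` and `𝐣 = 100…` vanishes for all
`γ ∈ (1/b, 1)`, hence all its coefficients vanish: `φ'` has every period `b⁻ⁿ`, so it is constant,
and the periodic function `φ` is constant. -/

end Weier

section Periods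

def Function.periodAddSubgroup {G α : Type*} [AddGroup G] (f : G → α) : AddSubgroup G where
  carrier := {c | Periodic f c}
  zero_mem' := fun x => by rw [add_zero]
  add_mem' := Periodic.add_period
  neg_mem' := Periodic.neg

theorem Continuous.eq_of_forall_exists_period {α : Type*} [TopologicalSpace α] [T2Space α]
    {f : ℝ → α} (hf : Continuous f) (h : ∀ ε > 0, ∃ c ∈ Ioo 0 ε, Periodic f c) (x y : ℝ) :
    f x = f y := by
  have hdense : Dense (periodAddSubgroup f : Set ℝ) :=
    (periodAddSubgroup f).dense_of_not_isolated_zero fun ε hε =>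
      let ⟨c, hc, hper⟩ := h ε hε; ⟨c, hper, hc⟩
  have hconst : f = fun _ => f 0 :=
    hf.ext_on hdense continuous_const fun c hc => by simpa using hc 0
  rw [hconst]

variable {E : Type*} [NormedAddCommGroup E] [NormedSpace ℝ E] {f : ℝ → E} {c : ℝ}

theorem Function.Periodic.periodic_deriv (hf : Periodic f c) : Periodic (deriv f) c := fun x => by
  rw [← deriv_comp_add_const, show (fun y => f (y + c)) = f from funext hf]

theorem Function.Periodic.eq_of_deriv_eq (hper : Periodic f c) (hc : c ≠ 0)
    (hf : Differentiable ℝ f) {v : E} (hv : ∀ x, deriv f x = v) (x y : ℝ) : f x = f y := by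
  have hlin (x : ℝ) : f x - x • v = f 0 := by
    have hd (x : ℝ) : HasDerivAt (fun x => f x - x • v) 0 x := by
      have := (hf x).hasDerivAt.sub ((hasDerivAt_id' x).smul_const v)
      rwa [hv x, one_smul, sub_self] at this
    simpa using is_const_of_deriv_eq_zero (fun x => (hd x).differentiableAt)
      (fun x => (hd x).deriv) x 0
  have hv0 : v = 0 := by
    have := hlin c
    rw [hper.eq, sub_eq_self, smul_eq_zero] at this
    exact this.resolve_left hc
  simpa [hv0] using (hlin x).trans (hlin y).symm

theorem Function.Periodic.exists_norm_deriv_le (hper : Periodic f c) (hc : c ≠ 0)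
    (hf : ContDiff ℝ 1 f) : ∃ M, ∀ x, ‖deriv f x‖ ≤ M :=
  let ⟨M, hM⟩ := isBounded_iff_forall_norm_le.1
    (hper.periodic_deriv.isBounded_of_continuous hc (hf.continuous_deriv le_rfl))
  ⟨M, fun x => hM _ ⟨x, rfl⟩⟩

theorem Function.Periodic.exists_lipschitzWith_deriv (hper : Periodic f c) (hc : c ≠ 0)
    (hf : ContDiff ℝ 2 f) : ∃ K, LipschitzWith K (deriv f) := by
  have hf' : ContDiff ℝ 1 (deriv f) := ((contDiff_succ_iff_deriv (n := 1)).1 hf).2.2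
  obtain ⟨K, hK⟩ := hper.periodic_deriv.exists_norm_deriv_le hc hf'
  refine ⟨K.toNNReal, lipschitzWith_of_nnnorm_deriv_le (hf'.differentiable one_ne_zero) fun x => ?_⟩
  rw [← NNReal.coe_le_coe, coe_nnnorm]
  exact (hK x).trans (Real.le_coe_toNNReal K)

end Periods

section PowerSeries

variable (𝕜 : Type*) {E : Type*} [NontriviallyNormedField 𝕜] [NormedAddCommGroup E]
  [NormedSpace 𝕜 E]

def FormalMultilinearSeries.ofCoeffs (c : ℕ → E) : FormalMultilinearSeries 𝕜 𝕜 E :=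
  fun n => ContinuousMultilinearMap.mkPiRing 𝕜 (Fin n) (c n)

variable {𝕜}

namespace FormalMultilinearSeries

theorem coeff_ofCoeffs (c : ℕ → E) (n : ℕ) : (ofCoeffs 𝕜 c).coeff n = c n := by
  simp [coeff, ofCoeffs]

theorem ofCoeffs_sum (c : ℕ → E) : (ofCoeffs 𝕜 c).sum = fun z => ∑' n, z ^ n • c n :=
  funext fun _ => tsum_congr fun n => by rw [apply_eq_pow_smul_coeff, coeff_ofCoeffs]

theorem le_radius_ofCoeffs {c : ℕ → E} {r : ℝ≥0} {C : ℝ} (hc : ∀ n, ‖c n‖ * r ^ n ≤ C) :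
    (r : ℝ≥0∞) ≤ (ofCoeffs 𝕜 c).radius :=
  (ofCoeffs 𝕜 c).le_radius_of_bound C fun n => by
    simpa [ofCoeffs, ContinuousMultilinearMap.norm_mkPiRing] using hc n

end FormalMultilinearSeries

open FormalMultilinearSeries in
theorem analyticOnNhd_tsum_pow_smul [CompleteSpace E] {c : ℕ → E} {r : ℝ≥0} {C : ℝ}
    (hc : ∀ n, ‖c n‖ * r ^ n ≤ C) :
    AnalyticOnNhd 𝕜 (fun z => ∑' n, z ^ n • c n) (Metric.ball (0 : 𝕜) r) := by
  intro z hz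
  have hz' : z ∈ Metric.eball (0 : 𝕜) (ofCoeffs 𝕜 c).radius :=
    lt_of_lt_of_le (by simpa [edist_zero_right, ← NNReal.coe_lt_coe] using hz)
      (le_radius_ofCoeffs hc)
  have hrad : (0 : ℝ≥0∞) < (ofCoeffs 𝕜 c).radius := pos_of_gt hz'
  exact ofCoeffs_sum (𝕜 := 𝕜) c ▸ ((ofCoeffs 𝕜 c).hasFPowerSeriesOnBall hrad).analyticAt_of_mem hz'

open FormalMultilinearSeries in
theorem eq_zero_of_tsum_pow_smul_eventuallyEq_zero [CompleteSpace E] {c : ℕ → E} {r : ℝ≥0}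
    {C : ℝ} (hr : 0 < r) (hc : ∀ n, ‖c n‖ * r ^ n ≤ C)
    (h : ∀ᶠ z in 𝓝 (0 : 𝕜), ∑' n, z ^ n • c n = 0) : c = 0 := by
  have hrad : (0 : ℝ≥0∞) < (ofCoeffs 𝕜 c).radius :=
    lt_of_lt_of_le (by simpa using hr) (le_radius_ofCoeffs hc)
  have hp := ((ofCoeffs 𝕜 c).hasFPowerSeriesOnBall hrad).hasFPowerSeriesAt.eq_zero_of_eventually
    (by rwa [ofCoeffs_sum])
  funext n
  rw [← coeff_ofCoeffs (𝕜 := 𝕜) c n, hp]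
  rfl

end PowerSeries

theorem eq_zero_of_tsum_pow_smul_eqOn_zero {E : Type*} [NormedAddCommGroup E] [NormedSpace ℝ E]
    [CompleteSpace E] {c : ℕ → E} {r : ℝ≥0} {C : ℝ} (hc : ∀ n, ‖c n‖ * r ^ n ≤ C) {U : Set ℝ}
    (hU : IsOpen U) (hUr : U ⊆ Metric.ball 0 r) {z₀ : ℝ} (hz₀ : z₀ ∈ U)
    (h : EqOn (fun z => ∑' n, z ^ n • c n) 0 U) : c = 0 := by
  have hr : 0 < r := by simpa using Metric.nonempty_ball.1 ⟨z₀, hUr hz₀⟩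
  have hball : EqOn (fun z : ℝ => ∑' n, z ^ n • c n) 0 (Metric.ball 0 r) :=
    (analyticOnNhd_tsum_pow_smul hc).eqOn_zero_of_preconnected_of_eventuallyEq_zero
      (convex_ball 0 _).isPreconnected (hUr hz₀) (eventuallyEq_of_mem (hU.mem_nhds hz₀) h)
  exact eq_zero_of_tsum_pow_smul_eventuallyEq_zero hr hc
    (eventually_of_mem (Metric.ball_mem_nhds 0 (by exact_mod_cast hr)) fun z hz => hball hz)

theorem summable_pow_smul {E : Type*} [NormedAddCommGroup E] [NormedSpace ℝ E] [CompleteSpace E]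
    {γ M : ℝ} (hγ : ‖γ‖ < 1) {v : ℕ → E} (hv : ∀ n, ‖v n‖ ≤ M) :
    Summable fun n => γ ^ n • v n :=
  .of_norm_bounded ((summable_geometric_of_lt_one (norm_nonneg γ) hγ).mul_right M) fun n => by
    rw [norm_smul, norm_pow]
    exact mul_le_mul_of_nonneg_left (hv n) (by positivity)

section Analytic

variable {E F : Type*} [NormedAddCommGroup E] [InnerProductSpace ℝ E]
  [NormedAddCommGroup F] [NormedSpace ℝ F] {U : Set F}

theorem AnalyticOnNhd.det {ι : Type*} [Fintype ι] [DecidableEq ι] {A : ι → ι → F → ℝ}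
    (hA : ∀ i j, AnalyticOnNhd ℝ (A i j) U) :
    AnalyticOnNhd ℝ (fun x => (Matrix.of fun i j => A i j x).det) U := by
  simp only [Matrix.det_apply, Units.smul_def, zsmul_eq_mul, Matrix.of_apply]
  exact Finset.analyticOnNhd_fun_sum _ fun σ _ => analyticOnNhd_const.mul <|
    Finset.analyticOnNhd_fun_prod _ fun i _ => hA _ _

theorem AnalyticOnNhd.inner {f g : F → E} (hf : AnalyticOnNhd ℝ f U) (hg : AnalyticOnNhd ℝ g U) :
    AnalyticOnNhd ℝ (fun x => inner ℝ (f x) (g x)) U := fun x hx =>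
  ((innerSL ℝ : E →L[ℝ] E →L[ℝ] ℝ).analyticAt_bilinear (f x, g x)).comp₂ (hf x hx) (hg x hx)

theorem AnalyticOnNhd.det_gram {ι : Type*} [Fintype ι] [DecidableEq ι] {v : ι → F → E}
    (hv : ∀ i, AnalyticOnNhd ℝ (v i) U) :
    AnalyticOnNhd ℝ (fun x => (Matrix.gram ℝ fun i => v i x).det) U :=
  AnalyticOnNhd.det fun i j => (hv i).inner (hv j)

theorem AnalyticOnNhd.finite_zeros_of_isCompact {f : ℝ → ℝ} {K : Set ℝ}
    (hf : AnalyticOnNhd ℝ f K) (hK : IsCompact K) (hKc : IsPreconnected K) {x₀ : ℝ}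
    (hx₀ : x₀ ∈ K) (hne : f x₀ ≠ 0) : {x ∈ K | f x = 0}.Finite := by
  rcases hf.eqOn_zero_or_eventually_ne_zero_of_preconnected hKc with h | h
  · exact absurd (h hx₀) hne
  · exact (hK.finite_sdiff_of_mem_codiscreteWithin h).subset fun x hx => ⟨hx.1, not_not.2 hx.2⟩

end Analytic

theorem Set.exists_isMaxOn_of_bddAbove {α : Type*} {f : α → ℕ} {s : Set α} (hs : s.Nonempty)
    (hf : BddAbove (f '' s)) : ∃ a ∈ s, IsMaxOn f s a := by
  obtain ⟨a, ha, hfa⟩ := Nat.sSup_mem (hs.image f) hf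
  exact ⟨a, ha, fun x hx => hfa ▸ le_csSup hf ⟨x, hx, rfl⟩⟩

theorem Submodule.sSup_finrank_le {K V : Type*} [DivisionRing K] [AddCommGroup V] [Module K V]
    [FiniteDimensional K V] (W : Submodule K V) :
    sSup {n | ∃ U : Submodule K V, Module.finrank K U = n ∧ U ≤ W} = Module.finrank K W := by
  have hub : ∀ n ∈ {n | ∃ U : Submodule K V, Module.finrank K U = n ∧ U ≤ W},
      n ≤ Module.finrank K W := by
    rintro _ ⟨U, rfl, hU⟩
    exact Submodule.finrank_mono hU
  exact le_antisymm (csSup_le ⟨_, W, rfl, le_rfl⟩ hub) (le_csSup ⟨_, hub⟩ ⟨W, rfl, le_rfl⟩)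

namespace Weier

section Digits

variable {b : ℕ}

def digitSum (b : ℕ) (j : ℕ → Fin b) (m : ℕ) : ℝ :=
  ∑ k ∈ Finset.range m, ((j k : ℕ) : ℝ) * (b : ℝ) ^ k

def digitPoint (b : ℕ) (x : ℝ) (j : ℕ → Fin b) (n : ℕ) : ℝ :=
  (x + digitSum b j (n + 1)) / (b : ℝ) ^ (n + 1)

theorem digitSum_nonneg (j : ℕ → Fin b) (m : ℕ) : 0 ≤ digitSum b j m :=
  Finset.sum_nonneg fun _ _ => by positivity

theorem digitSum_lt (j : ℕ → Fin b) (m : ℕ) : digitSum b j m < (b : ℝ) ^ m := by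
  induction m with
  | zero => simp [digitSum]
  | succ m ih =>
    have hdigit : ((j m : ℕ) : ℝ) + 1 ≤ b := by exact_mod_cast (j m).isLt
    rw [digitSum, Finset.sum_range_succ, ← digitSum, pow_succ]
    nlinarith [pow_nonneg (Nat.cast_nonneg b : (0 : ℝ) ≤ b) m]

theorem abs_digitSum_sub_le {i j : ℕ → Fin b} {κ : ℕ} (hij : ∀ n ≥ κ, i n = j n) (m : ℕ) :
    |digitSum b i m - digitSum b j m| ≤ (b : ℝ) ^ κ := by
  rcases le_total m κ with h | h
  · have hb : (1 : ℝ) ≤ b := by exact_mod_cast (i 0).pos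
    exact (abs_sub_lt_of_nonneg_of_lt (digitSum_nonneg i m) (digitSum_lt i m)
      (digitSum_nonneg j m) (digitSum_lt j m)).le.trans (pow_le_pow_right₀ hb h)
  · have htail : ∑ k ∈ Finset.Ico κ m, ((i k : ℕ) : ℝ) * (b : ℝ) ^ k =
        ∑ k ∈ Finset.Ico κ m, ((j k : ℕ) : ℝ) * (b : ℝ) ^ k :=
      Finset.sum_congr rfl fun k hk => by rw [hij k (Finset.mem_Ico.1 hk).1]
    rw [digitSum, digitSum, ← Finset.sum_range_add_sum_Ico _ h,
      ← Finset.sum_range_add_sum_Ico _ h, htail, add_sub_add_right_eq_sub]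
    exact (abs_sub_lt_of_nonneg_of_lt (digitSum_nonneg i κ) (digitSum_lt i κ)
      (digitSum_nonneg j κ) (digitSum_lt j κ)).le

theorem abs_digitPoint_sub_le {i j : ℕ → Fin b} {κ : ℕ} (hij : ∀ n ≥ κ, i n = j n)
    (x : ℝ) (n : ℕ) :
    |digitPoint b x i n - digitPoint b x j n| ≤ (b : ℝ) ^ κ / (b : ℝ) ^ (n + 1) := by
  have hpow : (0 : ℝ) ≤ (b : ℝ) ^ (n + 1) := by positivity
  rw [digitPoint, digitPoint, ← sub_div, add_sub_add_left_eq_sub, abs_div, abs_of_nonneg hpow]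
  exact div_le_div_of_nonneg_right (abs_digitSum_sub_le hij _) hpow

theorem continuous_digitPoint (x : ℝ) (n : ℕ) :
    Continuous fun j : ℕ → Fin b => digitPoint b x j n := by
  unfold digitPoint digitSum
  fun_prop

end Digits

section YFunction

variable {E : Type} [NormedAddCommGroup E] [NormedSpace ℝ E] {b : ℕ} {lam M : ℝ} {φ : ℝ → E}

theorem norm_one_div_mul_lt_one (hlam : lam ∈ Ioo (1 / (b : ℝ)) 1) :
    ‖1 / ((b : ℝ) * lam)‖ < 1 := by
  rcases Nat.eq_zero_or_pos b with rfl | hb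
  · simp
  have hb' : (0 : ℝ) < b := Nat.cast_pos.2 hb
  have h1 : 1 < (b : ℝ) * lam := by linarith [(div_lt_iff₀ hb').1 hlam.1]
  rw [Real.norm_of_nonneg (by positivity)]
  exact (div_lt_one (by linarith)).2 h1

theorem one_div_mul_mem_Ioo (hb : 0 < b) (hlam : lam ∈ Ioo (1 / (b : ℝ)) 1) :
    1 / ((b : ℝ) * lam) ∈ Ioo (1 / (b : ℝ)) 1 := by
  have hb' : (0 : ℝ) < b := Nat.cast_pos.2 hb
  have hlam0 : 0 < lam := lt_trans (by positivity) hlam.1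
  have h1 : 1 < (b : ℝ) * lam := by linarith [(div_lt_iff₀ hb').1 hlam.1]
  exact ⟨one_div_lt_one_div_of_lt (by positivity) (by nlinarith [hlam.2]),
    (div_lt_one (by linarith)).2 h1⟩

theorem one_div_mul_one_div_mul (hb : 0 < b) (hlam : lam ≠ 0) :
    1 / ((b : ℝ) * (1 / ((b : ℝ) * lam))) = lam := by
  have hb' : (b : ℝ) ≠ 0 := Nat.cast_ne_zero.2 hb.ne'
  field_simp

theorem Icc_one_div_subset_ball (hb : 1 < b) : Icc (1 / (b : ℝ)) 1 ⊆ Metric.ball 0 b := by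
  intro γ hγ
  have hb' : (1 : ℝ) < b := by exact_mod_cast hb
  rw [mem_ball_zero_iff, Real.norm_of_nonneg ((by positivity : (0 : ℝ) ≤ 1 / b).trans hγ.1)]
  linarith [hγ.2]

theorem Yf_eq_neg_smul_tsum (x : ℝ) (j : ℕ → Fin b) :
    Yf b lam φ x j = -((1 / ((b : ℝ) * lam)) •
      ∑' n, (1 / ((b : ℝ) * lam)) ^ n • deriv φ (digitPoint b x j n)) := by
  rw [Yf, ← tsum_const_smul'']
  congr 1
  exact tsum_congr fun n => by rw [pow_succ', mul_smul]; rfl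

def yDiffSeries (b : ℕ) (φ : ℝ → E) (x : ℝ) (i j : ℕ → Fin b) (γ : ℝ) : E :=
  ∑' n, γ ^ n • (deriv φ (digitPoint b x i n) - deriv φ (digitPoint b x j n))

theorem Yf_sub_Yf [CompleteSpace E] (hM : ∀ y, ‖deriv φ y‖ ≤ M)
    (hγ : ‖1 / ((b : ℝ) * lam)‖ < 1) (x : ℝ) (i j : ℕ → Fin b) :
    Yf b lam φ x i - Yf b lam φ x j =
      -((1 / ((b : ℝ) * lam)) • yDiffSeries b φ x i j (1 / ((b : ℝ) * lam))) := by
  rw [Yf_eq_neg_smul_tsum, Yf_eq_neg_smul_tsum, yDiffSeries, neg_sub_neg, ← neg_sub, ← smul_sub,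
    ← Summable.tsum_sub (summable_pow_smul hγ fun n => hM _) (summable_pow_smul hγ fun n => hM _)]
  simp only [smul_sub]

theorem Yf_comp_clm [CompleteSpace E] {F : Type} [NormedAddCommGroup F] [NormedSpace ℝ F]
    (L : E →L[ℝ] F) (hφ : Differentiable ℝ φ) (hM : ∀ y, ‖deriv φ y‖ ≤ M)
    (hγ : ‖1 / ((b : ℝ) * lam)‖ < 1) (x : ℝ) (j : ℕ → Fin b) :
    Yf b lam (fun t => L (φ t)) x j = L (Yf b lam φ x j) := by
  rw [Yf_eq_neg_smul_tsum, Yf_eq_neg_smul_tsum, map_neg, map_smul,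
    L.map_tsum (summable_pow_smul hγ fun n => hM _)]
  have hL (t : ℝ) : deriv (fun t => L (φ t)) t = L (deriv φ t) :=
    (L.hasFDerivAt.comp_hasDerivAt t (hφ t).hasDerivAt).deriv
  simp only [map_smul, hL]

theorem continuous_Yf [CompleteSpace E] (hφ' : Continuous (deriv φ)) (hM : ∀ y, ‖deriv φ y‖ ≤ M)
    (hγ : ‖1 / ((b : ℝ) * lam)‖ < 1) (x : ℝ) : Continuous (Yf b lam φ x) := by
  simp only [funext (Yf_eq_neg_smul_tsum (φ := φ) (lam := lam) x)]
  refine ((continuous_tsum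
    (f := fun n j => (1 / ((b : ℝ) * lam)) ^ n • deriv φ (digitPoint b x j n))
    (fun n => continuous_const.smul (hφ'.comp (continuous_digitPoint x n)))
    ((summable_geometric_of_lt_one (norm_nonneg _) hγ).mul_right M) fun n j => ?_).const_smul _).neg
  rw [norm_smul, norm_pow]
  exact mul_le_mul_of_nonneg_left (hM _) (by positivity)

theorem norm_deriv_digitPoint_sub_mul_pow_le {K : ℝ≥0} (hK : LipschitzWith K (deriv φ))
    {i j : ℕ → Fin b} {κ : ℕ} (hij : ∀ n ≥ κ, i n = j n) (x : ℝ) (n : ℕ) :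
    ‖deriv φ (digitPoint b x i n) - deriv φ (digitPoint b x j n)‖ * (b : ℝ) ^ n ≤
      K * (b : ℝ) ^ κ / b := by
  have hb : (0 : ℝ) < b := Nat.cast_pos.2 (i 0).pos
  calc ‖deriv φ (digitPoint b x i n) - deriv φ (digitPoint b x j n)‖ * (b : ℝ) ^ n
      ≤ K * ((b : ℝ) ^ κ / (b : ℝ) ^ (n + 1)) * (b : ℝ) ^ n := by
        gcongr
        exact (hK.norm_sub_le _ _).trans (by gcongr; exact abs_digitPoint_sub_le hij x n)
    _ = K * (b : ℝ) ^ κ / b := by field_simp; ring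

theorem analyticOnNhd_yDiffSeries [CompleteSpace E] {K : ℝ≥0} (hK : LipschitzWith K (deriv φ))
    {x : ℝ} {i j : ℕ → Fin b} (hij : i =ᶠ[atTop] j) :
    AnalyticOnNhd ℝ (yDiffSeries b φ x i j) (Metric.ball 0 b) := by
  obtain ⟨κ, hκ⟩ := eventually_atTop.1 hij
  have h := analyticOnNhd_tsum_pow_smul (𝕜 := ℝ) (r := (b : ℝ≥0)) fun n => by
    simpa using norm_deriv_digitPoint_sub_mul_pow_le hK hκ x n
  rw [NNReal.coe_natCast] at h
  exact h

end YFunction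

section DiffSpan

variable {E : Type} [NormedAddCommGroup E] [NormedSpace ℝ E] {b : ℕ} {lam M : ℝ} {φ : ℝ → E}

def diffSpan (b : ℕ) (lam : ℝ) (φ : ℝ → E) : Submodule ℝ E :=
  Submodule.span ℝ {v | ∃ x i j, Yf b lam φ x i - Yf b lam φ x j = v}

theorem Yf_sub_Yf_mem_diffSpan (x : ℝ) (i j : ℕ → Fin b) :
    Yf b lam φ x i - Yf b lam φ x j ∈ diffSpan b lam φ :=
  Submodule.subset_span ⟨x, i, j, rfl⟩

theorem condHstar_iff_diffSpan_eq_bot : CondHstar b lam φ ↔ diffSpan b lam φ = ⊥ := by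
  rw [diffSpan, Submodule.span_eq_bot]
  constructor
  · rintro h _ ⟨x, i, j, rfl⟩
    rw [h i j x, sub_self]
  · exact fun h i j x => sub_eq_zero.1 (h _ ⟨x, i, j, rfl⟩)

theorem diffSpan_comp_clm [CompleteSpace E] {F : Type} [NormedAddCommGroup F] [NormedSpace ℝ F]
    (L : E →L[ℝ] F) (hφ : Differentiable ℝ φ) (hM : ∀ y, ‖deriv φ y‖ ≤ M)
    (hγ : ‖1 / ((b : ℝ) * lam)‖ < 1) :
    diffSpan b lam (fun t => L (φ t)) = (diffSpan b lam φ).map (L : E →ₗ[ℝ] F) := by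
  rw [diffSpan, diffSpan, Submodule.map_span]
  congr 1
  ext v
  simp [Yf_comp_clm L hφ hM hγ]

theorem diffSpan_eq_span_eventuallyEq [CompleteSpace E] [FiniteDimensional ℝ E]
    (hφ' : Continuous (deriv φ)) (hM : ∀ y, ‖deriv φ y‖ ≤ M) (hγ : ‖1 / ((b : ℝ) * lam)‖ < 1) :
    diffSpan b lam φ = Submodule.span ℝ
      {v | ∃ x i j, i =ᶠ[atTop] j ∧ Yf b lam φ x i - Yf b lam φ x j = v} := by
  refine le_antisymm (Submodule.span_le.2 ?_)
    (Submodule.span_mono fun v ⟨x, i, j, _, hv⟩ => ⟨x, i, j, hv⟩)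
  rintro _ ⟨x, i, j, rfl⟩
  let w : ℕ → ℕ → Fin b := fun k n => if n < k then j n else i n
  have hw : Tendsto w atTop (𝓝 j) := tendsto_pi_nhds.2 fun n =>
    tendsto_const_nhds.congr' (eventually_atTop.2 ⟨n + 1, fun k hk => by
      simp [w, show n < k by omega]⟩)
  have hmem (k : ℕ) : Yf b lam φ x i - Yf b lam φ x (w k) ∈ Submodule.span ℝ
      {v | ∃ x i j, i =ᶠ[atTop] j ∧ Yf b lam φ x i - Yf b lam φ x j = v} :=
    Submodule.subset_span ⟨x, i, w k, eventually_atTop.2 ⟨k, fun n hn => by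
      simp [w, not_lt.2 hn]⟩, rfl⟩
  exact (Submodule.closed_of_finiteDimensional _).mem_of_tendsto
    (tendsto_const_nhds.sub (((continuous_Yf hφ' hM hγ x).tendsto j).comp hw))
    (Eventually.of_forall hmem)

theorem exists_linearIndependent_Yf_sub_Yf [CompleteSpace E] [FiniteDimensional ℝ E]
    (hφ' : Continuous (deriv φ)) (hM : ∀ y, ‖deriv φ y‖ ≤ M) (hγ : ‖1 / ((b : ℝ) * lam)‖ < 1) :
    ∃ (ι : Type) (_ : Fintype ι) (x : ι → ℝ) (i j : ι → ℕ → Fin b),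
      (∀ s, i s =ᶠ[atTop] j s) ∧
      LinearIndependent ℝ (fun s => Yf b lam φ (x s) (i s) - Yf b lam φ (x s) (j s)) ∧
      Fintype.card ι = Module.finrank ℝ (diffSpan b lam φ) := by
  obtain ⟨t, hts, hspan, hli⟩ := exists_linearIndependent ℝ
    {v | ∃ x i j, i =ᶠ[atTop] j ∧ Yf b lam φ x i - Yf b lam φ x j = v}
  have := hli.setFinite.fintype
  choose x i j hij hv using fun s : t => hts s.2
  refine ⟨t, inferInstance, x, i, j, hij, ?_, ?_⟩
  · simpa only [hv] using hli
  · rw [diffSpan_eq_span_eventuallyEq hφ' hM hγ, ← hspan, finrank_span_set_eq_card hli,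
      Set.toFinset_card]

end DiffSpan

section RankPositive

variable {E : Type} [NormedAddCommGroup E] [NormedSpace ℝ E] [CompleteSpace E] {b : ℕ} {M : ℝ}
  {φ : ℝ → E}

theorem deriv_digitPoint_eq_of_forall_Yf_eq (hb : 1 < b) (hM : ∀ y, ‖deriv φ y‖ ≤ M) {K : ℝ≥0}
    (hK : LipschitzWith K (deriv φ)) {x : ℝ} {i j : ℕ → Fin b} (hij : i =ᶠ[atTop] j)
    (h : ∀ lam ∈ Ioo (1 / (b : ℝ)) 1, Yf b lam φ x i = Yf b lam φ x j) (n : ℕ) :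
    deriv φ (digitPoint b x i n) = deriv φ (digitPoint b x j n) := by
  obtain ⟨κ, hκ⟩ := eventually_atTop.1 hij
  have hb0 : 0 < b := by omega
  have hzero : EqOn (yDiffSeries b φ x i j) 0 (Ioo (1 / (b : ℝ)) 1) := fun γ hγ => by
    have hγ0 : 0 < γ := lt_trans (by positivity) hγ.1
    have hlam := one_div_mul_mem_Ioo hb0 hγ
    have hY := Yf_sub_Yf hM (norm_one_div_mul_lt_one hlam) x i j
    rw [h _ hlam, sub_self, one_div_mul_one_div_mul hb0 hγ0.ne', eq_comm, neg_eq_zero,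
      smul_eq_zero] at hY
    exact hY.resolve_left hγ0.ne'
  have hc (n : ℕ) : ‖deriv φ (digitPoint b x i n) - deriv φ (digitPoint b x j n)‖ *
      (b : ℝ≥0) ^ n ≤ K * (b : ℝ) ^ κ / b := by
    simpa using norm_deriv_digitPoint_sub_mul_pow_le hK hκ x n
  obtain ⟨γ₀, hγ₀⟩ := nonempty_Ioo.2
    ((div_lt_one (by positivity)).2 (by exact_mod_cast hb) : 1 / (b : ℝ) < 1)
  exact sub_eq_zero.1 (congrFun (eq_zero_of_tsum_pow_smul_eqOn_zero hc isOpen_Ioo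
    (by simpa using Ioo_subset_Icc_self.trans (Icc_one_div_subset_ball hb)) hγ₀ hzero) n)

theorem periodic_deriv_of_forall_condHstar (hb : 2 ≤ b) (hM : ∀ y, ‖deriv φ y‖ ≤ M) {K : ℝ≥0}
    (hK : LipschitzWith K (deriv φ)) (h : ∀ lam ∈ Ioo (1 / (b : ℝ)) 1, CondHstar b lam φ)
    (n : ℕ) : Periodic (deriv φ) ((b : ℝ) ^ (n + 1))⁻¹ := fun y => by
  have hb0 : 0 < b := by omega
  let i₀ : ℕ → Fin b := fun _ => ⟨0, hb0⟩
  let j₁ : ℕ → Fin b := fun n => if n = 0 then ⟨1, hb⟩ else ⟨0, hb0⟩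
  have hij : i₀ =ᶠ[atTop] j₁ :=
    eventually_atTop.2 ⟨1, fun n hn => by simp [i₀, j₁, Nat.one_le_iff_ne_zero.1 hn]⟩
  have hpow : (b : ℝ) ^ (n + 1) ≠ 0 := by positivity
  have h₀ : digitPoint b (y * (b : ℝ) ^ (n + 1)) i₀ n = y := by
    simp [digitPoint, digitSum, i₀, hpow]
  have h₁ : digitPoint b (y * (b : ℝ) ^ (n + 1)) j₁ n = y + ((b : ℝ) ^ (n + 1))⁻¹ := by
    have hsum : digitSum b j₁ (n + 1) = 1 := by simp [digitSum, Finset.sum_range_succ', j₁]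
    rw [digitPoint, hsum]
    field_simp
  have := deriv_digitPoint_eq_of_forall_Yf_eq (by omega) hM hK hij
    (fun lam hlam => h lam hlam i₀ j₁ _) (x := y * (b : ℝ) ^ (n + 1)) n
  rw [h₀, h₁] at this
  exact this.symm

theorem exists_not_condHstar (hb : 2 ≤ b) (hper : Periodic φ 1) (hφ : ContDiff ℝ 2 φ)
    (hnc : ¬ ∃ c, ∀ x, φ x = c) : ∃ lam ∈ Ioo (1 / (b : ℝ)) 1, ¬ CondHstar b lam φ := by
  by_contra! h
  obtain ⟨M, hM⟩ := hper.exists_norm_deriv_le one_ne_zero (hφ.of_le one_le_two)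
  obtain ⟨K, hK⟩ := hper.exists_lipschitzWith_deriv one_ne_zero hφ
  have hconst := (hφ.continuous_deriv one_le_two).eq_of_forall_exists_period fun ε hε => by
    obtain ⟨n, hn⟩ := exists_pow_lt_of_lt_one hε
      ((div_lt_one (by positivity)).2 (by exact_mod_cast hb) : 1 / (b : ℝ) < 1)
    refine ⟨((b : ℝ) ^ (n + 1))⁻¹, ⟨by positivity, lt_of_le_of_lt ?_ hn⟩,
      periodic_deriv_of_forall_condHstar hb hM hK h n⟩
    rw [one_div_pow, ← one_div]
    exact one_div_le_one_div_of_le (by positivity)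
      (pow_le_pow_right₀ (by exact_mod_cast (by omega : 1 ≤ b)) n.le_succ)
  exact hnc ⟨φ 0, fun x => hper.eq_of_deriv_eq one_ne_zero (hφ.differentiable two_ne_zero)
    (fun x => hconst x 0) x 0⟩

end RankPositive

section Finiteness

variable {E : Type} [NormedAddCommGroup E] [InnerProductSpace ℝ E] [FiniteDimensional ℝ E]
  {b : ℕ} {φ : ℝ → E}

theorem finite_setOf_finrank_diffSpan_lt (hb : 1 < b) (hper : Periodic φ 1)
    (hφ : ContDiff ℝ 2 φ) {lam₀ : ℝ} (hlam₀ : lam₀ ∈ Ioo (1 / (b : ℝ)) 1) :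
    {lam ∈ Ioo (1 / (b : ℝ)) 1 |
      Module.finrank ℝ (diffSpan b lam φ) < Module.finrank ℝ (diffSpan b lam₀ φ)}.Finite := by
  classical
  obtain ⟨M, hM⟩ := hper.exists_norm_deriv_le one_ne_zero (hφ.of_le one_le_two)
  obtain ⟨K, hK⟩ := hper.exists_lipschitzWith_deriv one_ne_zero hφ
  have hb0 : 0 < b := by omega
  obtain ⟨ι, _, x, i, j, hij, hli, hcard⟩ := exists_linearIndependent_Yf_sub_Yf
    (hφ.continuous_deriv one_le_two) hM (norm_one_div_mul_lt_one hlam₀)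
  let v (s : ι) (γ : ℝ) : E := -(γ • yDiffSeries b φ (x s) (i s) (j s) γ)
  have hv {lam : ℝ} (hlam : lam ∈ Ioo (1 / (b : ℝ)) 1) (s : ι) :
      v s (1 / ((b : ℝ) * lam)) = Yf b lam φ (x s) (i s) - Yf b lam φ (x s) (j s) :=
    (Yf_sub_Yf hM (norm_one_div_mul_lt_one hlam) _ _ _).symm
  let G (γ : ℝ) : ℝ := (Matrix.gram ℝ fun s => v s γ).det
  have hG : AnalyticOnNhd ℝ G (Icc (1 / (b : ℝ)) 1) :=
    (AnalyticOnNhd.det_gram fun s => (analyticOnNhd_id.smul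
      (analyticOnNhd_yDiffSeries hK (hij s))).neg).mono (Icc_one_div_subset_ball hb)
  have hG₀ : G (1 / ((b : ℝ) * lam₀)) ≠ 0 := by
    simpa only [G, hv hlam₀] using Matrix.det_gram_ne_zero_iff_linearIndependent.2 hli
  have hzeros := hG.finite_zeros_of_isCompact isCompact_Icc isPreconnected_Icc
    (Ioo_subset_Icc_self (one_div_mul_mem_Ioo hb0 hlam₀)) hG₀
  refine (hzeros.image fun γ => 1 / ((b : ℝ) * γ)).subset ?_
  rintro lam ⟨hlam, hlt⟩
  refine ⟨1 / ((b : ℝ) * lam), ⟨Ioo_subset_Icc_self (one_div_mul_mem_Ioo hb0 hlam), ?_⟩,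
    one_div_mul_one_div_mul hb0 (lt_trans (by positivity) hlam.1).ne'⟩
  by_contra hne
  have hli' := Matrix.det_gram_ne_zero_iff_linearIndependent.1
    (by simpa only [G, hv hlam] using hne)
  refine hlt.not_ge (hcard ▸ (finrank_span_eq_card hli').symm.le.trans
    (Submodule.finrank_mono (Submodule.span_le.2 ?_)))
  rintro _ ⟨s, rfl⟩
  exact Yf_sub_Yf_mem_diffSpan _ _ _

end Finiteness

section Euclidean

variable {d b : ℕ} {lam M : ℝ} {φ : ℝ → Ed d}

theorem condHstar_projS_iff (V : Submodule ℝ (Ed d)) (hφ : Differentiable ℝ φ)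
    (hM : ∀ y, ‖deriv φ y‖ ≤ M) (hγ : ‖1 / ((b : ℝ) * lam)‖ < 1) :
    CondHstar b lam (fun x => projS V (φ x)) ↔ V ≤ (diffSpan b lam φ)ᗮ := by
  rw [condHstar_iff_diffSpan_eq_bot,
    show (fun x => projS V (φ x)) = fun x => V.starProjection (φ x) from rfl,
    diffSpan_comp_clm _ hφ hM hγ, ← LinearMap.le_ker_iff_map, Submodule.ker_starProjection,
    ← Submodule.isOrtho_iff_le, Submodule.isOrtho_comm, Submodule.isOrtho_iff_le]

theorem q'val_eq (hper : Periodic φ 1) (hφ : ContDiff ℝ 1 φ)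
    (hlam : lam ∈ Ioo (1 / (b : ℝ)) 1) :
    q'val d b lam φ = d - Module.finrank ℝ (diffSpan b lam φ) := by
  obtain ⟨M, hM⟩ := hper.exists_norm_deriv_le one_ne_zero hφ
  simp_rw [q'val, condHstar_projS_iff _ (hφ.differentiable one_ne_zero) hM
    (norm_one_div_mul_lt_one hlam)]
  rw [Submodule.sSup_finrank_le]
  have := (diffSpan b lam φ).finrank_add_finrank_orthogonal
  rw [finrank_euclideanSpace_fin] at this
  omega

theorem p'val_eq (hper : Periodic φ 1) (hφ : ContDiff ℝ 1 φ) {lam₀ : ℝ}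
    (hlam₀ : lam₀ ∈ Ioo (1 / (b : ℝ)) 1)
    (hmax : IsMaxOn (fun lam => Module.finrank ℝ (diffSpan b lam φ)) (Ioo (1 / (b : ℝ)) 1) lam₀) :
    p'val d b φ = d - Module.finrank ℝ (diffSpan b lam₀ φ) := by
  refine le_antisymm (Nat.sInf_le ⟨lam₀, hlam₀, q'val_eq hper hφ hlam₀⟩)
    (le_csInf ⟨_, lam₀, hlam₀, q'val_eq hper hφ hlam₀⟩ ?_)
  rintro _ ⟨lam, hlam, rfl⟩
  rw [q'val_eq hper hφ hlam]
  exact Nat.sub_le_sub_left (hmax hlam) d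

end Euclidean

/-- Theorem B: for an integer `b ≥ 2` and a non-constant `ℤ`-periodic `C³` function
`φ : ℝ → ℝ^d`, one has `p'(φ,b) < d`, and there are at most finitely many `λ ∈ (1/b,1)`
with `q'(φ,λ,b) > p'(φ,b)`. -/
theorem theorem_B (d b : ℕ) (hb : 2 ≤ b) (φ : ℝ → Ed d)
    (hper : Function.Periodic φ 1) (hC3 : ContDiff ℝ 3 φ)
    (hnc : ¬ ∃ c : Ed d, ∀ x : ℝ, φ x = c) :
    p'val d b φ < d ∧
    {lam ∈ Set.Ioo (1 / (b : ℝ)) 1 | p'val d b φ < q'val d b lam φ}.Finite := by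
  have hb₁ : 1 < b := by omega
  have hC2 : ContDiff ℝ 2 φ := hC3.of_le (by norm_num)
  have hC1 : ContDiff ℝ 1 φ := hC3.of_le (by norm_num)
  have hrank (lam : ℝ) : Module.finrank ℝ (diffSpan b lam φ) ≤ d :=
    (Submodule.finrank_le _).trans_eq finrank_euclideanSpace_fin
  obtain ⟨lam₀, hlam₀, hmax⟩ := Set.exists_isMaxOn_of_bddAbove
    (nonempty_Ioo.2 ((div_lt_one (by positivity)).2 (by exact_mod_cast hb₁) : 1 / (b : ℝ) < 1))
    ⟨d, by rintro _ ⟨lam, -, rfl⟩; exact hrank lam⟩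
  have hp := p'val_eq hper hC1 hlam₀ hmax
  obtain ⟨lam₁, hlam₁, hH⟩ := exists_not_condHstar hb hper hC2 hnc
  have hpos : Module.finrank ℝ (diffSpan b lam₁ φ) ≠ 0 := by
    rwa [Ne, Submodule.finrank_eq_zero, ← condHstar_iff_diffSpan_eq_bot]
  have hle : Module.finrank ℝ (diffSpan b lam₁ φ) ≤ Module.finrank ℝ (diffSpan b lam₀ φ) :=
    hmax hlam₁
  refine ⟨by rw [hp]; have := hrank lam₀; omega,
    (finite_setOf_finrank_diffSpan_lt hb₁ hper hC2 hlam₀).subset ?_⟩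
  rintro lam ⟨hlam, hlt⟩
  rw [hp, q'val_eq hper hC1 hlam] at hlt
  exact ⟨hlam, by have := hrank lam; omega⟩

end Weier
end
end

section
/- Let b ≥ 2 be an integer and let φ : ℝ → ℝ^d be a ℤ-periodic C^k function, where k ∈ {5, 6, …, ∞, ω}. Then for every λ ∈ (1/b, 1), q(φ,λ,b) = q′(φ,λ,b). -/
/-!
Projection commutes with the series defining `W`, so both maxima run over the same subspaces once
we know that, for a `C¹` periodic `ψ`, `W^ψ` is Lipschitz iff `ψ` satisfies (H*).

If `W` is Lipschitz, it is differentiable almost everywhere with bounded derivative. Differentiating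
the self-affinity `W((y + j)/b) = ψ((y + j)/b) + λ W(y)` along the inverse branches prescribed by
`𝐣` and telescoping gives `Y(·, 𝐣) = W'` almost everywhere; the `Y(·, 𝐣)` are continuous, hence
all equal.

Conversely, under (H*) the function `Y = Y(·, 0̄)` coincides with `Y(· - 1, 10̄)`, so it is
periodic, and it solves `ψ'(y) = Y(y) - bλ Y(by)`. Its primitive `Γ` then satisfies
`ψ - ψ(0) = Γ - λ Γ(b·)`; evaluating at `1` shows that `Y` has mean zero (as `bλ ≠ 1`), so `Γ` is
periodic and bounded. Finally `W - Γ` is a bounded solution of `G = ψ(0) + λ G(b·)`, hence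
constant, and `W` is Lipschitz with constant `sup ‖Y‖`.
-/

open MeasureTheory Filter Metric Set Function
open scoped ENNReal NNReal Topology

noncomputable section

namespace Weier

theorem _root_.Function.Periodic.exists_norm_le {E : Type*} [SeminormedAddGroup E] {f : ℝ → E}
    {c : ℝ} (hp : Periodic f c) (hc : c ≠ 0) (hf : Continuous f) : ∃ M, ∀ x, ‖f x‖ ≤ M := by
  obtain ⟨M, hM⟩ := (hp.isBounded_of_continuous hc hf).exists_norm_le
  exact ⟨M, fun x => hM _ (mem_range_self x)⟩

theorem _root_.Function.Periodic.deriv {E : Type*} [NormedAddCommGroup E] [NormedSpace ℝ E]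
    {f : ℝ → E} {c : ℝ} (hp : Periodic f c) : Periodic (deriv f) c := fun x => by
  rw [← deriv_comp_add_const, hp.funext]

lemma one_div_mem_Ico_of_one_lt {x : ℝ} (h : 1 < x) : 1 / x ∈ Ico 0 1 :=
  ⟨one_div_nonneg.2 (by linarith), (div_lt_one (by linarith)).2 h⟩

lemma _root_.Summable.hasSum_sub_of_tendsto {E : Type*} [AddCommGroup E] [TopologicalSpace E]
    [IsTopologicalAddGroup E] [T2Space E] {a s : ℕ → E} {l : E} (ha : Summable a)
    (h : ∀ n, a n = s (n + 1) - s n) (hs : Tendsto s atTop (𝓝 l)) : HasSum a (l - s 0) := by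
  rw [ha.hasSum_iff_tendsto_nat]
  simpa only [h, Finset.sum_range_sub] using hs.sub_const (s 0)

lemma eq_zero_of_norm_le_of_eq_smul_comp {α E : Type*} [NormedAddCommGroup E] [NormedSpace ℝ E]
    {D : α → E} {f : α → α} {lam M : ℝ} (hlam : |lam| < 1) (hM : ∀ x, ‖D x‖ ≤ M)
    (hD : ∀ x, D x = lam • D (f x)) (x : α) : D x = 0 := by
  have hiter : ∀ n x, D x = lam ^ n • D (f^[n] x) := by
    intro n
    induction n with
    | zero => simp
    | succ n ih =>
      intro x
      rw [hD x, ih (f x), smul_smul, ← pow_succ', Function.iterate_succ_apply]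
  have hlim : Tendsto (fun n => |lam| ^ n * M) atTop (𝓝 0) := by
    simpa using (tendsto_pow_atTop_nhds_zero_of_lt_one (abs_nonneg lam) hlam).mul_const M
  refine norm_le_zero_iff.1 (ge_of_tendsto' hlim fun n => ?_)
  rw [hiter n x, norm_smul, Real.norm_eq_abs, abs_pow]
  exact mul_le_mul_of_nonneg_left (hM _) (by positivity)

section Series

variable {E : Type*} [NormedAddCommGroup E] [NormedSpace ℝ E] {r M : ℝ} {g : ℕ → E}

lemma norm_pow_smul_le (hr : r ∈ Ico 0 1) (hg : ∀ n, ‖g n‖ ≤ M) (n : ℕ) :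
    ‖r ^ n • g n‖ ≤ M * r ^ n := by
  rw [norm_smul, norm_pow, Real.norm_of_nonneg hr.1, mul_comm]
  exact mul_le_mul_of_nonneg_right (hg n) (pow_nonneg hr.1 n)

lemma norm_tsum_pow_smul_le (hr : r ∈ Ico 0 1) (hg : ∀ n, ‖g n‖ ≤ M) :
    ‖∑' n, r ^ n • g n‖ ≤ M * (1 - r)⁻¹ :=
  tsum_of_norm_bounded ((hasSum_geometric_of_lt_one hr.1 hr.2).mul_left M)
    (norm_pow_smul_le hr hg)

variable [CompleteSpace E]

lemma summable_pow_smul_of_norm_le (hr : r ∈ Ico 0 1) (hg : ∀ n, ‖g n‖ ≤ M) :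
    Summable fun n => r ^ n • g n :=
  .of_norm_bounded ((summable_geometric_of_lt_one hr.1 hr.2).mul_left M) (norm_pow_smul_le hr hg)

end Series

section Weierstrass

variable {E F : Type} [NormedAddCommGroup E] [NormedSpace ℝ E] [NormedAddCommGroup F]
  [NormedSpace ℝ F] {b : ℕ} {lam M : ℝ} {ψ : ℝ → E}

lemma norm_Wf_le (hlam : lam ∈ Ico 0 1) (hM : ∀ x, ‖ψ x‖ ≤ M) (x : ℝ) :
    ‖Wf b lam ψ x‖ ≤ M * (1 - lam)⁻¹ :=
  norm_tsum_pow_smul_le hlam fun _ => hM _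

lemma Wf_periodic (hp : Periodic ψ 1) : Periodic (Wf b lam ψ) 1 := fun x => by
  refine tsum_congr fun n => ?_
  simpa [mul_add] using congrArg (lam ^ n • ·) (hp.nat_mul (b ^ n) ((b : ℝ) ^ n * x))

variable [CompleteSpace E]

lemma map_Wf (L : E →L[ℝ] F) (hlam : lam ∈ Ico 0 1) (hM : ∀ x, ‖ψ x‖ ≤ M)
    (x : ℝ) : L (Wf b lam ψ x) = Wf b lam (fun t => L (ψ t)) x := by
  rw [Wf, Wf, L.map_tsum (summable_pow_smul_of_norm_le hlam fun _ => hM _)]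
  simp_rw [L.map_smul]

lemma Wf_eq_add_smul_Wf_mul (hlam : lam ∈ Ico 0 1) (hM : ∀ x, ‖ψ x‖ ≤ M) (x : ℝ) :
    Wf b lam ψ x = ψ x + lam • Wf b lam ψ (b * x) := by
  have hs (y : ℝ) : Summable fun n => lam ^ n • ψ ((b : ℝ) ^ n * y) :=
    summable_pow_smul_of_norm_le hlam fun _ => hM _
  rw [Wf, Wf, (hs x).tsum_eq_zero_add, ← (hs _).tsum_const_smul]
  simp only [pow_zero, one_mul, one_smul, smul_smul, pow_succ, mul_assoc, mul_comm lam]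

lemma Wf_add_nat_div (hb : b ≠ 0) (hlam : lam ∈ Ico 0 1) (hM : ∀ x, ‖ψ x‖ ≤ M)
    (hp : Periodic ψ 1) (j : ℕ) (y : ℝ) :
    Wf b lam ψ ((y + j) / b) = ψ ((y + j) / b) + lam • Wf b lam ψ y := by
  have hWj : Wf b lam ψ (y + j) = Wf b lam ψ y := by simpa using (Wf_periodic hp).nat_mul j y
  rw [Wf_eq_add_smul_Wf_mul hlam hM, mul_div_cancel₀ _ (Nat.cast_ne_zero.2 hb), hWj]

end Weierstrass

lemma ne_zero_and_pos_of_one_lt_mul {b : ℕ} {lam : ℝ} (h : 1 < (b : ℝ) * lam) :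
    b ≠ 0 ∧ 0 < lam :=
  ⟨by rintro rfl; simp at h; linarith, pos_of_mul_pos_right (by linarith) (Nat.cast_nonneg b)⟩

def branchPt (b : ℕ) (j : ℕ → Fin b) (n : ℕ) (x : ℝ) : ℝ :=
  (x + ∑ k ∈ Finset.range n, ((j k : ℕ) : ℝ) * (b : ℝ) ^ k) / (b : ℝ) ^ n

section Branch

variable {b : ℕ} {j : ℕ → Fin b}

@[simp]
lemma branchPt_zero (x : ℝ) : branchPt b j 0 x = x := by
  simp [branchPt]

lemma branchPt_succ (hb : b ≠ 0) (n : ℕ) (x : ℝ) :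
    branchPt b j (n + 1) x = (branchPt b j n x + (j n : ℕ)) / b := by
  have : (b : ℝ) ≠ 0 := Nat.cast_ne_zero.2 hb
  simp only [branchPt, Finset.sum_range_succ]
  field_simp
  ring

lemma ae_forall_branchPt (hb : b ≠ 0) {P : ℝ → Prop} (h : ∀ᵐ y, P y) :
    ∀ᵐ x, ∀ n, P (branchPt b j n x) := by
  refine ae_all_iff.2 fun n => ?_
  have hB : ((b : ℝ) ^ n)⁻¹ ≠ 0 := inv_ne_zero (pow_ne_zero n (Nat.cast_ne_zero.2 hb))
  have hqmp := (Measure.quasiMeasurePreserving_smul volume hB).comp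
    (measurePreserving_add_right volume
      (∑ k ∈ Finset.range n, ((j k : ℕ) : ℝ) * (b : ℝ) ^ k)).quasiMeasurePreserving
  filter_upwards [hqmp.ae h] with x hx
  simpa [branchPt, div_eq_inv_mul] using hx

end Branch

section Yf

variable {E : Type} [NormedAddCommGroup E] [NormedSpace ℝ E] {b : ℕ} {lam M : ℝ} {ψ : ℝ → E}

lemma Yf_eq_neg_tsum_branchPt (x : ℝ) (j : ℕ → Fin b) :
    Yf b lam ψ x j = -∑' n, (1 / ((b : ℝ) * lam)) ^ (n + 1) • deriv ψ (branchPt b j (n + 1) x) :=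
  rfl

lemma Yf_add_one {i j : ℕ → Fin b} (hj : ∀ k, (j k : ℕ) = 0)
    (hi : ∀ k, (i k : ℕ) = if k = 0 then 1 else 0) (x : ℝ) :
    Yf b lam ψ (x + 1) j = Yf b lam ψ x i := by
  simp [Yf, hi, hj]

variable [CompleteSpace E]

lemma continuous_Yf_s7 (hbl : 1 < (b : ℝ) * lam) (hd : Continuous (deriv ψ))
    (hM : ∀ x, ‖deriv ψ x‖ ≤ M) (j : ℕ → Fin b) : Continuous fun x => Yf b lam ψ x j := by
  have hγ := one_div_mem_Ico_of_one_lt hbl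
  have hs := (summable_nat_add_iff 1).2 ((summable_geometric_of_lt_one hγ.1 hγ.2).mul_left M)
  refine (continuous_tsum (fun n => ?_) hs fun n x => norm_pow_smul_le hγ (fun _ => hM _) _).neg
  exact (hd.comp ((continuous_add_const _).div_const _)).const_smul _

lemma deriv_eq_Yf_sub_smul_Yf_mul (hbl : 1 < (b : ℝ) * lam) (hM : ∀ x, ‖deriv ψ x‖ ≤ M)
    {j : ℕ → Fin b} (hj : ∀ k, (j k : ℕ) = 0) (y : ℝ) :
    deriv ψ y = Yf b lam ψ y j - ((b : ℝ) * lam) • Yf b lam ψ (b * y) j := by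
  set γ := 1 / ((b : ℝ) * lam)
  have hb : (b : ℝ) ≠ 0 := Nat.cast_ne_zero.2 (ne_zero_and_pos_of_one_lt_mul hbl).1
  have hbγ : ((b : ℝ) * lam) * γ = 1 := mul_one_div_cancel (by linarith)
  have hs : Summable fun n => γ ^ n • deriv ψ (y / (b : ℝ) ^ n) :=
    summable_pow_smul_of_norm_le (one_div_mem_Ico_of_one_lt hbl) fun _ => hM _
  have hY (x : ℝ) : Yf b lam ψ x j = -∑' n, γ ^ (n + 1) • deriv ψ (x / (b : ℝ) ^ (n + 1)) := by
    simp [Yf, hj, γ]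
  have hYy : Yf b lam ψ y j = deriv ψ y - ∑' n, γ ^ n • deriv ψ (y / (b : ℝ) ^ n) := by
    rw [hY, hs.tsum_eq_zero_add]
    simp
  have hYby : Yf b lam ψ (b * y) j = -(γ • ∑' n, γ ^ n • deriv ψ (y / (b : ℝ) ^ n)) := by
    rw [hY, ← hs.tsum_const_smul]
    congr 1
    refine tsum_congr fun n => ?_
    rw [smul_smul, ← pow_succ', pow_succ' (b : ℝ), mul_div_mul_left _ _ hb]
  rw [hYy, hYby, smul_neg, smul_smul, hbγ, one_smul]
  abel

end Yf

lemma hasDerivAt_of_eq_add_smul_comp {E : Type*} [NormedAddCommGroup E] [NormedSpace ℝ E]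
    {W ψ : ℝ → E} {β lam c z : ℝ} (hlam : lam ≠ 0)
    (hW : ∀ y, W ((y + c) / β) = ψ ((y + c) / β) + lam • W y)
    (hψ : DifferentiableAt ℝ ψ ((z + c) / β)) (hWz : DifferentiableAt ℝ W ((z + c) / β)) :
    HasDerivAt W ((1 / (β * lam)) • (deriv W ((z + c) / β) - deriv ψ ((z + c) / β))) z := by
  have haff : HasDerivAt (fun y => (y + c) / β) (1 / β) z := by
    simpa using ((hasDerivAt_id z).add_const c).div_const β
  have h := ((hWz.hasDerivAt.scomp z haff).sub (hψ.hasDerivAt.scomp z haff)).const_smul lam⁻¹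
  convert h using 1
  · funext y
    simp only [Pi.smul_apply, Pi.sub_apply, Function.comp_apply, hW y, add_sub_cancel_left,
      inv_smul_smul₀ hlam]
  · rw [← smul_sub, smul_smul, one_div, one_div, mul_inv, mul_comm]

section Lipschitz

variable {E : Type} [NormedAddCommGroup E] [NormedSpace ℝ E] [CompleteSpace E]
  {b : ℕ} {lam : ℝ} {ψ : ℝ → E}

lemma Yf_eq_deriv_Wf (hbl : 1 < (b : ℝ) * lam) (hlam : lam < 1) (hψ : ContDiff ℝ 1 ψ)
    (hp : Periodic ψ 1) {K : ℝ≥0} (hK : LipschitzWith K (Wf b lam ψ)) {j : ℕ → Fin b} {x : ℝ}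
    (hx : ∀ n, DifferentiableAt ℝ (Wf b lam ψ) (branchPt b j n x)) :
    Yf b lam ψ x j = deriv (Wf b lam ψ) x := by
  obtain ⟨hb, hlam0⟩ := ne_zero_and_pos_of_one_lt_mul hbl
  set γ := 1 / ((b : ℝ) * lam) with hγdef
  have hγ : γ ∈ Ico 0 1 := one_div_mem_Ico_of_one_lt hbl
  obtain ⟨M, hM⟩ := hp.exists_norm_le one_ne_zero hψ.continuous
  obtain ⟨Md, hMd⟩ := hp.deriv.exists_norm_le one_ne_zero (hψ.continuous_deriv le_rfl)
  set s : ℕ → E := fun n => γ ^ n • deriv (Wf b lam ψ) (branchPt b j n x)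
  set a : ℕ → E := fun n => γ ^ (n + 1) • deriv ψ (branchPt b j (n + 1) x)
  have hstep (n : ℕ) : a n = s (n + 1) - s n := by
    have hW := hasDerivAt_of_eq_add_smul_comp hlam0.ne'
      (Wf_add_nat_div hb ⟨hlam0.le, hlam⟩ hM hp (j n)) (hψ.differentiable one_ne_zero _)
      (by rw [← branchPt_succ hb]; exact hx (n + 1))
    rw [← branchPt_succ hb, ← hγdef] at hW
    simp only [a, s, hW.deriv, smul_sub, smul_smul, ← pow_succ]
    abel
  have ha : Summable a :=
    (summable_nat_add_iff (f := fun n => γ ^ n • deriv ψ (branchPt b j n x)) 1).2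
      (summable_pow_smul_of_norm_le hγ fun _ => hMd _)
  have hs : Tendsto s atTop (𝓝 0) :=
    squeeze_zero_norm (norm_pow_smul_le hγ fun _ => norm_deriv_le_of_lipschitz hK)
      (by simpa using (tendsto_pow_atTop_nhds_zero_of_lt_one hγ.1 hγ.2).const_mul (K : ℝ))
  rw [Yf_eq_neg_tsum_branchPt, (ha.hasSum_sub_of_tendsto hstep hs).tsum_eq]
  simp [s]

theorem condHstar_of_lipschitzWith [FiniteDimensional ℝ E] (hbl : 1 < (b : ℝ) * lam)
    (hlam : lam < 1) (hψ : ContDiff ℝ 1 ψ) (hp : Periodic ψ 1) {K : ℝ≥0}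
    (hK : LipschitzWith K (Wf b lam ψ)) : CondHstar b lam ψ := by
  intro i j x
  obtain ⟨Md, hMd⟩ := hp.deriv.exists_norm_le one_ne_zero (hψ.continuous_deriv le_rfl)
  have hY := continuous_Yf_s7 hbl (hψ.continuous_deriv le_rfl) hMd
  have hae (j : ℕ → Fin b) : ∀ᵐ y, Yf b lam ψ y j = deriv (Wf b lam ψ) y := by
    filter_upwards [ae_forall_branchPt (ne_zero_and_pos_of_one_lt_mul hbl).1
      hK.ae_differentiableAt_real] with y hy
    exact Yf_eq_deriv_Wf hbl hlam hψ hp hK hy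
  refine congrFun (((hY i).ae_eq_iff_eq volume (hY j)).1 ?_) x
  filter_upwards [hae i, hae j] with y hi hj
  rw [hi, hj]

end Lipschitz

section Coboundary

variable {E : Type} [NormedAddCommGroup E] [NormedSpace ℝ E] [CompleteSpace E]
  {b : ℕ} {lam : ℝ} {ψ Y : ℝ → E}

lemma eq_add_primitive_sub_smul_primitive (hψ : Differentiable ℝ ψ) (hY : Continuous Y)
    (hcoh : ∀ y, deriv ψ y = Y y - ((b : ℝ) * lam) • Y (b * y)) (x : ℝ) :
    ψ x = ψ 0 + ((∫ t in 0..x, Y t) - lam • ∫ t in 0..b * x, Y t) := by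
  set Γ := fun x => ∫ t in 0..x, Y t
  have hΓ (x : ℝ) : HasDerivAt Γ (Y x) x := (hY.integral_hasStrictDerivAt 0 x).hasDerivAt
  have hF (x : ℝ) : HasDerivAt (fun x => ψ x - Γ x + lam • Γ (b * x)) 0 x := by
    have h := ((hψ x).hasDerivAt.sub (hΓ x)).add
      (((hΓ (b * x)).scomp x ((hasDerivAt_id x).const_mul (b : ℝ))).const_smul lam)
    refine h.congr_deriv ?_
    rw [hcoh, mul_one, smul_smul, mul_comm lam]
    abel
  have hconst :=
    is_const_of_deriv_eq_zero (fun x => (hF x).differentiableAt) (fun x => (hF x).deriv) x 0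
  simp only [Γ, mul_zero, intervalIntegral.integral_same, smul_zero, sub_zero, add_zero] at hconst
  rw [← hconst]
  abel

lemma periodic_primitive (hbl : (b : ℝ) * lam ≠ 1) (hψ : Differentiable ℝ ψ)
    (hp : Periodic ψ 1) (hY : Continuous Y) (hYp : Periodic Y 1)
    (hcoh : ∀ y, deriv ψ y = Y y - ((b : ℝ) * lam) • Y (b * y)) :
    Periodic (fun x => ∫ t in 0..x, Y t) 1 := by
  have hadd (x : ℝ) : ∫ t in 0..x + 1, Y t = (∫ t in 0..x, Y t) + ∫ t in 0..1, Y t := by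
    simpa using hYp.intervalIntegral_add_eq_add 0 x fun _ _ => hY.intervalIntegrable _ _
  have hnat (n : ℕ) : ∫ t in 0..n, Y t = (n : ℝ) • ∫ t in 0..1, Y t := by
    induction n with
    | zero => simp
    | succ n ih => rw [Nat.cast_succ, hadd, ih, add_smul, one_smul]
  suffices hmean : ∫ t in 0..1, Y t = 0 from fun x => by simp only [hadd, hmean, add_zero]
  have h1 := eq_add_primitive_sub_smul_primitive hψ hY hcoh 1
  rw [mul_one, hnat, smul_smul, hp.eq, left_eq_add, sub_eq_zero] at h1
  have h2 : (1 - lam * b) • ∫ t in 0..1, Y t = 0 := by rw [sub_smul, one_smul, ← h1, sub_self]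
  exact (smul_eq_zero.1 h2).resolve_left (sub_ne_zero.2 (Ne.symm (by rwa [mul_comm] at hbl)))

theorem exists_lipschitzWith_Wf_of_deriv_eq (hbl : (b : ℝ) * lam ≠ 1) (hlam : lam ∈ Ico 0 1)
    (hψ : Differentiable ℝ ψ) (hp : Periodic ψ 1) (hY : Continuous Y) (hYp : Periodic Y 1)
    (hcoh : ∀ y, deriv ψ y = Y y - ((b : ℝ) * lam) • Y (b * y)) :
    ∃ K : ℝ≥0, LipschitzWith K (Wf b lam ψ) := by
  set Γ := fun x => ∫ t in 0..x, Y t with hΓdef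
  have hΓ (x : ℝ) : HasDerivAt Γ (Y x) x := (hY.integral_hasStrictDerivAt 0 x).hasDerivAt
  obtain ⟨M, hM⟩ := hp.exists_norm_le one_ne_zero hψ.continuous
  obtain ⟨MΓ, hMΓ⟩ := (periodic_primitive hbl hψ hp hY hYp hcoh).exists_norm_le one_ne_zero
    (continuous_iff_continuousAt.2 fun x => (hΓ x).continuousAt)
  obtain ⟨MY, hMY⟩ := hYp.exists_norm_le one_ne_zero hY
  set c := (1 - lam)⁻¹ • ψ 0
  have hc : (1 - lam) • c = ψ 0 := smul_inv_smul₀ (sub_ne_zero.2 hlam.2.ne') _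
  have hbdd (x : ℝ) : ‖Wf b lam ψ x - Γ x - c‖ ≤ M * (1 - lam)⁻¹ + MΓ + ‖c‖ :=
    (norm_sub_le _ _).trans (add_le_add_left ((norm_sub_le _ _).trans
      (add_le_add (norm_Wf_le hlam hM x) (hMΓ x))) _)
  have hscale (x : ℝ) :
      Wf b lam ψ x - Γ x - c = lam • (Wf b lam ψ (b * x) - Γ (b * x) - c) := by
    simp only [hΓdef]
    rw [Wf_eq_add_smul_Wf_mul hlam hM x, eq_add_primitive_sub_smul_primitive hψ hY hcoh x, ← hc]
    module
  have hW : Wf b lam ψ = fun x => Γ x + c := funext fun x => by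
    simpa only [sub_sub, sub_eq_zero] using eq_zero_of_norm_le_of_eq_smul_comp
      (D := fun x => Wf b lam ψ x - Γ x - c) (abs_lt.2 ⟨by linarith [hlam.1], hlam.2⟩) hbdd hscale x
  refine ⟨MY.toNNReal, ?_⟩
  rw [hW]
  refine lipschitzWith_of_nnnorm_deriv_le (fun x => ((hΓ x).add_const c).differentiableAt)
    fun x => ?_
  rw [((hΓ x).add_const c).deriv, ← NNReal.coe_le_coe, coe_nnnorm]
  exact (hMY x).trans (Real.le_coe_toNNReal MY)

end Coboundary

section Hstar

variable {E : Type} [NormedAddCommGroup E] [NormedSpace ℝ E] [CompleteSpace E]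
  {b : ℕ} {lam : ℝ} {ψ : ℝ → E}

theorem exists_lipschitzWith_Wf_of_condHstar (hb : 2 ≤ b) (hbl : 1 < (b : ℝ) * lam)
    (hlam : lam < 1) (hψ : ContDiff ℝ 1 ψ) (hp : Periodic ψ 1) (h : CondHstar b lam ψ) :
    ∃ K : ℝ≥0, LipschitzWith K (Wf b lam ψ) := by
  let z : ℕ → Fin b := fun _ => ⟨0, by omega⟩
  let o : ℕ → Fin b := fun k => if k = 0 then ⟨1, hb⟩ else ⟨0, by omega⟩
  have hz (k : ℕ) : (z k : ℕ) = 0 := rfl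
  have ho (k : ℕ) : (o k : ℕ) = if k = 0 then 1 else 0 := by
    simp only [o]
    split_ifs <;> rfl
  have hd := hψ.continuous_deriv le_rfl
  obtain ⟨Md, hMd⟩ := hp.deriv.exists_norm_le one_ne_zero hd
  exact exists_lipschitzWith_Wf_of_deriv_eq hbl.ne'
    ⟨(ne_zero_and_pos_of_one_lt_mul hbl).2.le, hlam⟩ (hψ.differentiable one_ne_zero) hp
    (continuous_Yf_s7 hbl hd hMd z) (fun x => (Yf_add_one hz ho x).trans (h o z x))
    (deriv_eq_Yf_sub_smul_Yf_mul hbl hMd hz)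

theorem exists_lipschitzWith_Wf_iff_condHstar [FiniteDimensional ℝ E] (hb : 2 ≤ b)
    (hbl : 1 < (b : ℝ) * lam) (hlam : lam < 1) (hψ : ContDiff ℝ 1 ψ) (hp : Periodic ψ 1) :
    (∃ K : ℝ≥0, LipschitzWith K (Wf b lam ψ)) ↔ CondHstar b lam ψ :=
  ⟨fun ⟨_, hK⟩ => condHstar_of_lipschitzWith hbl hlam hψ hp hK,
    exists_lipschitzWith_Wf_of_condHstar hb hbl hlam hψ hp⟩

end Hstar

/-- For `b ≥ 2` and a `ℤ`-periodic `C^k` function `φ : ℝ → ℝ^d` with `k ∈ {5,6,…,∞,ω}`,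
one has `q(φ,λ,b) = q'(φ,λ,b)` for every `λ ∈ (1/b,1)`. -/
theorem q_eq_q' (d b : ℕ) (hb : 2 ≤ b) (φ : ℝ → Ed d)
    (hper : Function.Periodic φ 1) (k : WithTop ℕ∞) (hk : 5 ≤ k)
    (hφ : ContDiff ℝ k φ) :
    ∀ lam ∈ Set.Ioo (1 / (b : ℝ)) 1, qval d b lam φ = q'val d b lam φ := by
  intro lam ⟨hlam0, hlam1⟩
  have hbl : 1 < (b : ℝ) * lam := (div_lt_iff₀' (Nat.cast_pos.2 (by omega))).1 hlam0
  have hφ1 : ContDiff ℝ 1 φ := hφ.of_le (le_trans (by norm_num) hk)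
  obtain ⟨M, hM⟩ := hper.exists_norm_le one_ne_zero hφ1.continuous
  unfold qval q'val
  congr 1
  ext n
  refine exists_congr fun V => and_congr_right fun _ => ?_
  let P : Ed d →L[ℝ] Ed d := V.subtypeL ∘L V.orthogonalProjectionOnto
  have hPW : (fun x => projS V (Wf b lam φ x)) = Wf b lam fun t => projS V (φ t) :=
    funext (map_Wf P ⟨(ne_zero_and_pos_of_one_lt_mul hbl).2.le, hlam1⟩ hM)
  rw [hPW]
  exact exists_lipschitzWith_Wf_iff_condHstar hb hbl hlam1 (P.contDiff.comp hφ1) (hper.comp P)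

end Weier
end
end

section
/- For any ε > 0 there exists M(ε) such that for every m ≥ M(ε) the following holds. Let ω, η be compactly supported Borel probability measures on ℝ^d and V < ℝ^d a linear subspace. If ω is (V, ε, m)-saturated and (1/m)H(ω ∗ η, ℒ_m) ≤ (1/m)H(η, ℒ_m) + ε, then η is (V, 3ε, m)-saturated. -/
open MeasureTheory Filter Metric Set Function
open scoped ENNReal NNReal Topology

noncomputable section

namespace Weier

/-!
Let `X, Y` be independent with laws `ω, η`, let `π` be the orthogonal projection onto `V^⊥`, and
take all entropies with respect to level-`m` `b`-adic cells. A point whose cell is determined, up to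
`O_d(1)` choices, by the cells of other points adds only `O_d(1)` entropy to them. Hence
`H(X+Y) ≥ H(X+Y, π(X+Y)) - O(1) = H(π(X+Y)) + H(X+Y | π(X+Y)) - O(1)`, where, since conditioning
decreases entropy,
`H(π(X+Y)) ≥ H(π(X+Y) | X) ≥ H(πY) - O(1)` and
`H(X+Y | π(X+Y)) ≥ H(X+Y | π(X+Y), Y) ≥ H(X | πX) - O(1) ≥ H(X) - H(πX) - O(1)`.
So `H(ω ∗ η) ≥ H(πη) + H(ω) - H(πω) - O(1)`; dividing by `m`, the two hypotheses give the
saturation of `η` up to an error `O(1)/m`, which is at most `ε` for large `m`.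
-/

open Real (negMulLog)

lemma negMulLog_sum_le {ι : Type*} {s : Finset ι} {t : ι → ℝ} (ht : ∀ i ∈ s, 0 ≤ t i) :
    negMulLog (∑ i ∈ s, t i) ≤ ∑ i ∈ s, negMulLog (t i) := by
  rw [negMulLog, neg_mul, Finset.sum_mul, ← Finset.sum_neg_distrib]
  refine Finset.sum_le_sum fun i hi => ?_
  rcases (ht i hi).eq_or_lt with h | h
  · simp [← h]
  · rw [negMulLog, neg_mul, neg_le_neg_iff]
    exact mul_le_mul_of_nonneg_left
      (Real.log_le_log h (Finset.single_le_sum ht hi)) h.le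

lemma sum_negMulLog_le {ι : Type*} {s : Finset ι} {t : ι → ℝ} (ht : ∀ i ∈ s, 0 ≤ t i) :
    ∑ i ∈ s, negMulLog (t i) ≤ negMulLog (∑ i ∈ s, t i) + (∑ i ∈ s, t i) * Real.log s.card := by
  rcases s.eq_empty_or_nonempty with rfl | hs
  · simp
  have hn : (0 : ℝ) < s.card := by exact_mod_cast hs.card_pos
  have jensen := Real.concaveOn_negMulLog.le_map_sum (t := s) (w := fun _ => (s.card : ℝ)⁻¹)
    (p := t) (fun _ _ => by positivity) (by simp [hn.ne']) ht
  simp only [smul_eq_mul, ← Finset.mul_sum] at jensen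
  rw [mul_comm, Real.negMulLog_mul, negMulLog, Real.log_inv] at jensen
  field_simp at jensen
  linarith

/-- The log-sum inequality. -/
lemma sum_negMulLog_add_mul_log_le {ι : Type*} {s : Finset ι} {p q : ι → ℝ}
    (hp : ∀ i ∈ s, 0 ≤ p i) (hpq : ∀ i ∈ s, p i ≤ q i) :
    ∑ i ∈ s, (negMulLog (p i) + p i * Real.log (q i)) ≤
      negMulLog (∑ i ∈ s, p i) + (∑ i ∈ s, p i) * Real.log (∑ i ∈ s, q i) := by
  rcases (Finset.sum_nonneg hp).eq_or_lt with hP | hP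
  · have hzero : ∀ i ∈ s, p i = 0 := (Finset.sum_eq_zero_iff_of_nonneg hp).1 hP.symm
    rw [Finset.sum_eq_zero fun i hi => by simp [hzero i hi], ← hP]
    simp
  set P := ∑ i ∈ s, p i
  set Q := ∑ i ∈ s, q i
  have hQ : 0 < Q := hP.trans_le (Finset.sum_le_sum hpq)
  have tangent : ∀ i ∈ s, negMulLog (p i) + p i * Real.log (q i) ≤
      p i * (Real.log Q - Real.log P) + (P / Q * q i - p i) := by
    intro i hi
    rcases (hp i hi).eq_or_lt with h | h
    · simp only [← h, Real.negMulLog_zero, zero_mul, add_zero, zero_add, sub_zero]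
      exact mul_nonneg (div_nonneg hP.le hQ.le) ((hp i hi).trans (hpq i hi))
    have hq : 0 < q i := h.trans_le (hpq i hi)
    have hlog := Real.log_le_sub_one_of_pos (show 0 < P / Q * (q i / p i) by positivity)
    rw [Real.log_mul (by positivity) (by positivity), Real.log_div hP.ne' hQ.ne',
      Real.log_div hq.ne' h.ne'] at hlog
    have hscaled := mul_le_mul_of_nonneg_left hlog h.le
    rw [negMulLog]
    field_simp at hscaled ⊢
    nlinarith
  calc _ ≤ ∑ i ∈ s, (p i * (Real.log Q - Real.log P) + (P / Q * q i - p i)) :=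
        Finset.sum_le_sum tangent
    _ = _ := by
        rw [Finset.sum_add_distrib, Finset.sum_sub_distrib, ← Finset.sum_mul, ← Finset.mul_sum,
          negMulLog, div_mul_cancel₀ _ hQ.ne']
        ring

lemma preimage_prodMk_singleton {X ι κ : Type*} (f : X → ι) (g : X → κ) (i : ι) (j : κ) :
    (fun x => (f x, g x)) ⁻¹' {(i, j)} = f ⁻¹' {i} ∩ g ⁻¹' {j} := by
  ext; simp

section Entropy

variable {X ι κ κ' : Type*} [MeasurableSpace X] {μ : Measure X}

/-- A partition is encoded by a labelling map, its cells being the fibres: `ℒ_m` by `cellIndex`,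
`π⁻¹ ℒ_m` by `cellIndex ∘ π`, and the join of two partitions by the pairing of their maps. -/
def IsFinitePartition [MeasurableSpace ι] (μ : Measure X) (f : X → ι) : Prop :=
  Measurable f ∧ ∃ I : Finset ι, ∀ᵐ x ∂μ, f x ∈ I

def entropy (μ : Measure X) (f : X → ι) : ℝ :=
  ∑' i, negMulLog (μ.real (f ⁻¹' {i}))

def condEntropy (μ : Measure X) (f : X → ι) (g : X → κ) : ℝ :=
  entropy μ (fun x => (f x, g x)) - entropy μ g

lemma measureReal_preimage_singleton_eq_zero {f : X → ι} {I : Finset ι}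
    (hI : ∀ᵐ x ∂μ, f x ∈ I) {i : ι} (hi : i ∉ I) : μ.real (f ⁻¹' {i}) = 0 := by
  rw [measureReal_def, measure_mono_null (s := f ⁻¹' {i})
    (fun x (hx : f x = i) hxI => hi (hx ▸ hxI)) (ae_iff.1 hI), ENNReal.toReal_zero]

lemma entropy_eq_sum {f : X → ι} {I : Finset ι} (hI : ∀ᵐ x ∂μ, f x ∈ I) :
    entropy μ f = ∑ i ∈ I, negMulLog (μ.real (f ⁻¹' {i})) :=
  tsum_eq_sum fun i hi => by rw [measureReal_preimage_singleton_eq_zero hI hi, Real.negMulLog_zero]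

section Measurable

variable [MeasurableSpace ι] [MeasurableSpace κ]

lemma IsFinitePartition.prodMk {f : X → ι} {g : X → κ} (hf : IsFinitePartition μ f)
    (hg : IsFinitePartition μ g) : IsFinitePartition μ (fun x => (f x, g x)) := by
  obtain ⟨hfm, I, hI⟩ := hf
  obtain ⟨hgm, J, hJ⟩ := hg
  exact ⟨hfm.prodMk hgm, I ×ˢ J, by
    filter_upwards [hI, hJ] with x hi hj using Finset.mem_product.2 ⟨hi, hj⟩⟩

variable [MeasurableSingletonClass ι] [MeasurableSingletonClass κ] [MeasurableSpace κ']
  [MeasurableSingletonClass κ']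

lemma measureReal_eq_sum_inter_preimage [IsFiniteMeasure μ] {g : X → κ} (hg : Measurable g)
    {J : Finset κ} (hJ : ∀ᵐ x ∂μ, g x ∈ J) {A : Set X} (hA : MeasurableSet A) :
    μ.real A = ∑ j ∈ J, μ.real (A ∩ g ⁻¹' {j}) := by
  rw [← measureReal_biUnion_finset
    (fun j _ j' _ hjj' => Disjoint.inter_right' A ((Disjoint.preimage g
      (Set.disjoint_singleton.2 hjj')).inter_left' A))
    (fun j _ => hA.inter (hg (measurableSet_singleton j)))]
  refine measureReal_congr (Filter.Eventually.set_eq ?_)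
  filter_upwards [hJ] with x hx
  simp only [Set.mem_iUnion, Set.mem_inter_iff, Set.mem_preimage, Set.mem_singleton_iff,
    exists_prop]
  exact ⟨fun h => ⟨g x, hx, h, rfl⟩, fun ⟨_, _, h, _⟩ => h⟩

lemma sum_measureReal_preimage_singleton_eq_one [IsProbabilityMeasure μ] {g : X → κ}
    (hg : Measurable g) {J : Finset κ} (hJ : ∀ᵐ x ∂μ, g x ∈ J) :
    ∑ j ∈ J, μ.real (g ⁻¹' {j}) = 1 := by
  simpa using (measureReal_eq_sum_inter_preimage hg hJ MeasurableSet.univ).symm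

lemma entropy_map {Y : Type*} [MeasurableSpace Y] {φ : X → Y} (hφ : Measurable φ) {f : Y → ι}
    (hf : Measurable f) : entropy (μ.map φ) f = entropy μ (fun x => f (φ x)) := by
  unfold entropy
  congr! with i
  rw [map_measureReal_apply hφ (hf (measurableSet_singleton i))]
  rfl

lemma entropy_le_entropy_prodMk [IsFiniteMeasure μ] {f : X → ι} {g : X → κ}
    (hf : IsFinitePartition μ f) (hg : IsFinitePartition μ g) :
    entropy μ f ≤ entropy μ (fun x => (f x, g x)) := by
  obtain ⟨hfm, I, hI⟩ := hf
  obtain ⟨hgm, J, hJ⟩ := hg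
  rw [entropy_eq_sum hI, entropy_eq_sum (I := I ×ˢ J) (by
    filter_upwards [hI, hJ] with x hi hj using Finset.mem_product.2 ⟨hi, hj⟩), Finset.sum_product]
  refine Finset.sum_le_sum fun i _ => ?_
  rw [measureReal_eq_sum_inter_preimage hgm hJ (hfm (measurableSet_singleton i))]
  simp only [preimage_prodMk_singleton]
  exact negMulLog_sum_le fun _ _ => measureReal_nonneg

lemma entropy_prodMk_le_add_log [IsProbabilityMeasure μ] {f : X → ι} {g : X → κ}
    (hf : Measurable f) (hg : IsFinitePartition μ g) {s : κ → Finset ι} {N : ℕ}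
    (hs : ∀ᵐ x ∂μ, f x ∈ s (g x)) (hN : ∀ j, (s j).card ≤ N) :
    entropy μ (fun x => (f x, g x)) ≤ entropy μ g + Real.log N := by
  classical
  obtain ⟨hgm, J, hJ⟩ := hg
  set I := J.biUnion s
  have hI : ∀ᵐ x ∂μ, f x ∈ I := by
    filter_upwards [hs, hJ] with x hx hj using Finset.mem_biUnion.2 ⟨_, hj, hx⟩
  have hsI : ∀ j ∈ J, s j ⊆ I := fun j hj => Finset.subset_biUnion_of_mem s hj
  have hnull : ∀ j, ∀ i ∉ s j, μ.real (f ⁻¹' {i} ∩ g ⁻¹' {j}) = 0 := by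
    intro j i hi
    refine (measureReal_eq_zero_iff).2 (measure_mono_null ?_ (ae_iff.1 hs))
    rintro x ⟨rfl, rfl⟩ hmem
    exact hi hmem
  have hmarg : ∀ j ∈ J, μ.real (g ⁻¹' {j}) = ∑ i ∈ s j, μ.real (f ⁻¹' {i} ∩ g ⁻¹' {j}) := by
    intro j hj
    rw [measureReal_eq_sum_inter_preimage hf hI (hgm (measurableSet_singleton j)),
      Finset.sum_subset (hsI j hj) fun i _ hi => hnull j i hi]
    simp only [Set.inter_comm]
  have hcard : ∀ j, Real.log (s j).card ≤ Real.log N := by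
    intro j
    rcases Nat.eq_zero_or_pos (s j).card with h | h
    · rw [h, Nat.cast_zero, Real.log_zero]
      exact Real.log_natCast_nonneg N
    · exact Real.log_le_log (by exact_mod_cast h) (by exact_mod_cast hN j)
  calc entropy μ (fun x => (f x, g x))
      = ∑ j ∈ J, ∑ i ∈ s j, negMulLog (μ.real (f ⁻¹' {i} ∩ g ⁻¹' {j})) := by
        rw [entropy_eq_sum (I := I ×ˢ J) (by
          filter_upwards [hI, hJ] with x hi hj using Finset.mem_product.2 ⟨hi, hj⟩),
          Finset.sum_product_right]
        refine Finset.sum_congr rfl fun j hj => ?_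
        simp only [preimage_prodMk_singleton]
        exact (Finset.sum_subset (hsI j hj) fun i _ hi => by
          rw [hnull j i hi, Real.negMulLog_zero]).symm
    _ ≤ ∑ j ∈ J, (negMulLog (μ.real (g ⁻¹' {j})) + μ.real (g ⁻¹' {j}) * Real.log N) := by
        refine Finset.sum_le_sum fun j hj => ?_
        rw [hmarg j hj]
        exact (sum_negMulLog_le fun _ _ => measureReal_nonneg).trans
          (add_le_add_right (mul_le_mul_of_nonneg_left (hcard j)
            (Finset.sum_nonneg fun _ _ => measureReal_nonneg)) _)
    _ = entropy μ g + Real.log N := by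
        rw [Finset.sum_add_distrib, ← Finset.sum_mul,
          sum_measureReal_preimage_singleton_eq_one hgm hJ, one_mul, entropy_eq_sum hJ]

lemma entropy_le_add_log [IsProbabilityMeasure μ] {f : X → ι} {g : X → κ}
    (hf : IsFinitePartition μ f) (hg : IsFinitePartition μ g) {s : κ → Finset ι} {N : ℕ}
    (hs : ∀ᵐ x ∂μ, f x ∈ s (g x)) (hN : ∀ j, (s j).card ≤ N) :
    entropy μ f ≤ entropy μ g + Real.log N :=
  (entropy_le_entropy_prodMk hf hg).trans (entropy_prodMk_le_add_log hf.1 hg hs hN)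

lemma condEntropy_eq_sum [IsFiniteMeasure μ] {f : X → ι} {g : X → κ} (hf : Measurable f)
    (hg : Measurable g) {I : Finset ι} {J : Finset κ} (hI : ∀ᵐ x ∂μ, f x ∈ I)
    (hJ : ∀ᵐ x ∂μ, g x ∈ J) :
    condEntropy μ f g = ∑ i ∈ I, ∑ j ∈ J, (negMulLog (μ.real (f ⁻¹' {i} ∩ g ⁻¹' {j})) +
      μ.real (f ⁻¹' {i} ∩ g ⁻¹' {j}) * Real.log (μ.real (g ⁻¹' {j}))) := by
  have hmarg : ∀ j, μ.real (g ⁻¹' {j}) = ∑ i ∈ I, μ.real (f ⁻¹' {i} ∩ g ⁻¹' {j}) := fun j => by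
    rw [measureReal_eq_sum_inter_preimage hf hI (hg (measurableSet_singleton j))]
    simp only [Set.inter_comm]
  rw [condEntropy, entropy_eq_sum (I := I ×ˢ J) (by
    filter_upwards [hI, hJ] with x hi hj using Finset.mem_product.2 ⟨hi, hj⟩),
    Finset.sum_product, entropy_eq_sum hJ]
  simp only [preimage_prodMk_singleton, Finset.sum_add_distrib]
  rw [Finset.sum_comm (s := I) (t := J) (f := fun i j => μ.real (f ⁻¹' {i} ∩ g ⁻¹' {j}) *
    Real.log (μ.real (g ⁻¹' {j}))), sub_eq_add_neg, ← Finset.sum_neg_distrib]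
  congr 1
  refine Finset.sum_congr rfl fun j _ => ?_
  rw [← Finset.sum_mul, ← hmarg, negMulLog, neg_mul, neg_neg]

lemma condEntropy_prodMk_le [IsFiniteMeasure μ] {f : X → ι} {g : X → κ} {u : X → κ'}
    (hf : IsFinitePartition μ f) (hg : IsFinitePartition μ g) (hu : IsFinitePartition μ u) :
    condEntropy μ f (fun x => (g x, u x)) ≤ condEntropy μ f g := by
  obtain ⟨hfm, I, hI⟩ := hf
  obtain ⟨hgm, J, hJ⟩ := hg
  obtain ⟨hum, K, hK⟩ := hu
  rw [condEntropy_eq_sum hfm (hgm.prodMk hum) hI (J := J ×ˢ K) (by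
    filter_upwards [hJ, hK] with x hj hk using Finset.mem_product.2 ⟨hj, hk⟩),
    condEntropy_eq_sum hfm hgm hI hJ]
  refine Finset.sum_le_sum fun i _ => ?_
  rw [Finset.sum_product]
  refine Finset.sum_le_sum fun j _ => ?_
  have hmarg_fg : μ.real (f ⁻¹' {i} ∩ g ⁻¹' {j}) =
      ∑ k ∈ K, μ.real (f ⁻¹' {i} ∩ (fun x => (g x, u x)) ⁻¹' {(j, k)}) := by
    rw [measureReal_eq_sum_inter_preimage hum hK
      ((hfm (measurableSet_singleton i)).inter (hgm (measurableSet_singleton j)))]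
    simp only [preimage_prodMk_singleton, Set.inter_assoc]
  have hmarg_g : μ.real (g ⁻¹' {j}) = ∑ k ∈ K, μ.real ((fun x => (g x, u x)) ⁻¹' {(j, k)}) := by
    rw [measureReal_eq_sum_inter_preimage hum hK (hgm (measurableSet_singleton j))]
    simp only [preimage_prodMk_singleton]
  rw [hmarg_fg, hmarg_g]
  exact sum_negMulLog_add_mul_log_le (fun _ _ => measureReal_nonneg)
    (fun _ _ => measureReal_mono Set.inter_subset_right)

lemma condEntropy_le_entropy [IsProbabilityMeasure μ] {f : X → ι} {g : X → κ}
    (hf : IsFinitePartition μ f) (hg : IsFinitePartition μ g) :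
    condEntropy μ f g ≤ entropy μ f := by
  obtain ⟨hfm, I, hI⟩ := hf
  obtain ⟨hgm, J, hJ⟩ := hg
  rw [condEntropy_eq_sum hfm hgm hI hJ, entropy_eq_sum hI]
  refine Finset.sum_le_sum fun i _ => ?_
  have := sum_negMulLog_add_mul_log_le (s := J) (p := fun j => μ.real (f ⁻¹' {i} ∩ g ⁻¹' {j}))
    (q := fun j => μ.real (g ⁻¹' {j})) (fun _ _ => measureReal_nonneg)
    (fun _ _ => measureReal_mono Set.inter_subset_right)
  rwa [sum_measureReal_preimage_singleton_eq_one hgm hJ, Real.log_one, mul_zero, add_zero,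
    ← measureReal_eq_sum_inter_preimage hgm hJ (hfm (measurableSet_singleton i))] at this

lemma entropy_prod_prodMk {Y : Type*} [MeasurableSpace Y] {ω : Measure X} {η : Measure Y}
    [IsProbabilityMeasure ω] [IsProbabilityMeasure η] {f : X → ι} {g : Y → κ}
    (hf : IsFinitePartition ω f) (hg : IsFinitePartition η g) :
    entropy (ω.prod η) (fun z => (f z.1, g z.2)) = entropy ω f + entropy η g := by
  obtain ⟨hfm, I, hI⟩ := hf
  obtain ⟨hgm, J, hJ⟩ := hg
  have hfib : ∀ p : ι × κ, (ω.prod η).real ((fun z => (f z.1, g z.2)) ⁻¹' {p}) =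
      ω.real (f ⁻¹' {p.1}) * η.real (g ⁻¹' {p.2}) := by
    rintro ⟨i, j⟩
    rw [← measureReal_prod_prod]
    congr 1
    ext
    simp
  rw [entropy, tsum_eq_sum (s := I ×ˢ J), entropy_eq_sum hI, entropy_eq_sum hJ]
  · simp only [hfib, Finset.sum_product, Real.negMulLog_mul, Finset.sum_add_distrib,
      ← Finset.sum_mul, ← Finset.mul_sum, sum_measureReal_preimage_singleton_eq_one hfm hI,
      sum_measureReal_preimage_singleton_eq_one hgm hJ]
    ring
  · rintro ⟨i, j⟩ hij
    rw [hfib]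
    rcases not_and_or.1 (Finset.mem_product.not.1 hij) with hi | hj
    · rw [measureReal_preimage_singleton_eq_zero hI hi, zero_mul, Real.negMulLog_zero]
    · rw [measureReal_preimage_singleton_eq_zero hJ hj, mul_zero, Real.negMulLog_zero]

lemma entropy_prod_comp_fst {Y : Type*} [MeasurableSpace Y] {ω : Measure X} {η : Measure Y}
    [SFinite ω] [IsProbabilityMeasure η] {f : X → ι} (hf : Measurable f) :
    entropy (ω.prod η) (fun z => f z.1) = entropy ω f := by
  rw [← entropy_map measurable_fst hf, Measure.map_fst_prod, measure_univ, one_smul]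

end Measurable

end Entropy

section Cells

variable {d : ℕ} (b m : ℕ)

def cellIndex (x : Ed d) : Fin d → ℤ := fun i => ⌊x i * (b : ℝ) ^ m⌋

def cellCorner (k : Fin d → ℤ) : Ed d := WithLp.toLp 2 fun i => (k i : ℝ) / (b : ℝ) ^ m

def nearCells (c : ℕ) (z : Ed d) : Finset (Fin d → ℤ) :=
  Fintype.piFinset fun i => Finset.Icc (cellIndex b m z i - c) (cellIndex b m z i + c)

variable {b m}

lemma bcell_eq_preimage_cellIndex (hb : 0 < b) (k : Fin d → ℤ) :
    bcell d b m k = cellIndex b m ⁻¹' {k} := by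
  have hbm : (0 : ℝ) < (b : ℝ) ^ m := by positivity
  ext x
  simp only [bcell, Set.mem_ofPred_eq, Set.mem_preimage, Set.mem_singleton_iff, funext_iff,
    cellIndex, Int.floor_eq_iff, div_le_iff₀ hbm, lt_div_iff₀ hbm]

lemma measurable_cellIndex : Measurable (cellIndex b m : Ed d → Fin d → ℤ) :=
  measurable_pi_lambda _ fun i =>
    ((measurable_pi_apply i).comp (PiLp.continuous_ofLp 2 _).measurable |>.mul_const _).floor

lemma entH_eq_entropy (hb : 0 < b) (ν : Measure (Ed d)) :
    entH d b m ν = entropy ν (cellIndex b m) / Real.log b := by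
  rw [entH, entropy, ← tsum_div_const]
  congr! 2 with k
  rw [bcell_eq_preimage_cellIndex hb, Real.logb, negMulLog, measureReal_def]
  ring

lemma dist_cellCorner_cellIndex_le (hb : 0 < b) (x : Ed d) :
    dist x (cellCorner b m (cellIndex b m x)) ≤ d / (b : ℝ) ^ m := by
  have hbm : (0 : ℝ) < (b : ℝ) ^ m := by positivity
  have hcoord : ∀ i, dist (x i) (cellCorner b m (cellIndex b m x) i) ^ 2 ≤
      (1 / (b : ℝ) ^ m) ^ 2 := by
    intro i
    have h1 : (⌊x i * (b : ℝ) ^ m⌋ : ℝ) / (b : ℝ) ^ m ≤ x i :=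
      (div_le_iff₀ hbm).2 (Int.floor_le _)
    have h2 : x i < (⌊x i * (b : ℝ) ^ m⌋ : ℝ) / (b : ℝ) ^ m + 1 / (b : ℝ) ^ m :=
      by rw [← add_div, lt_div_iff₀ hbm]; exact Int.lt_floor_add_one _
    refine pow_le_pow_left₀ dist_nonneg ?_ 2
    rw [Real.dist_eq, abs_le]
    simp only [cellCorner, cellIndex, PiLp.toLp_apply]
    constructor <;> linarith
  have hsqrt : √(d : ℝ) ≤ d :=
    Real.sqrt_le_iff.2 ⟨d.cast_nonneg, by exact_mod_cast Nat.le_self_pow two_ne_zero d⟩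
  calc dist x (cellCorner b m (cellIndex b m x))
      ≤ √(∑ _i : Fin d, (1 / (b : ℝ) ^ m) ^ 2) :=
        (EuclideanSpace.dist_eq _ _).trans_le
          (Real.sqrt_le_sqrt (Finset.sum_le_sum fun i _ => hcoord i))
    _ = √(d : ℝ) * (1 / (b : ℝ) ^ m) := by
        rw [Finset.sum_const, Finset.card_univ, Fintype.card_fin, nsmul_eq_mul,
          Real.sqrt_mul d.cast_nonneg, Real.sqrt_sq (by positivity)]
    _ ≤ d / (b : ℝ) ^ m := by
        rw [mul_one_div]
        exact div_le_div_of_nonneg_right hsqrt hbm.le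

lemma card_nearCells (c : ℕ) (z : Ed d) : (nearCells b m c z).card = (2 * c + 1) ^ d := by
  have hIcc : ∀ k : ℤ, (k + c + 1 - (k - c)).toNat = 2 * c + 1 := fun k => by omega
  simp only [nearCells, Fintype.card_piFinset, Int.card_Icc, hIcc, Finset.prod_const,
    Finset.card_univ, Fintype.card_fin]

lemma cellIndex_mem_nearCells (hb : 0 < b) {c : ℕ} {x z : Ed d}
    (h : dist x z ≤ c / (b : ℝ) ^ m) : cellIndex b m x ∈ nearCells b m c z := by
  have hbm : (0 : ℝ) < (b : ℝ) ^ m := by positivity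
  simp only [nearCells, Fintype.mem_piFinset, Finset.mem_Icc]
  intro i
  have hi : |x i * (b : ℝ) ^ m - z i * (b : ℝ) ^ m| ≤ c := by
    rw [← sub_mul, abs_mul, abs_of_pos hbm, ← le_div_iff₀ hbm, ← Real.dist_eq]
    exact (PiLp.dist_apply_le x z i).trans h
  rw [abs_le] at hi
  constructor
  · rw [cellIndex, cellIndex, ← Int.floor_sub_natCast]
    exact Int.floor_mono (by linarith)
  · rw [cellIndex, cellIndex, ← Int.floor_add_natCast]
    exact Int.floor_mono (by linarith)

lemma cellIndex_map_add_map_mem_nearCells (hb : 0 < b) {φ ψ : Ed d →L[ℝ] Ed d} (hφ : ‖φ‖ ≤ 1)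
    (hψ : ‖ψ‖ ≤ 1) (u v : Ed d) :
    cellIndex b m (φ u + ψ v) ∈ nearCells b m (2 * d)
      (φ (cellCorner b m (cellIndex b m u)) + ψ (cellCorner b m (cellIndex b m v))) := by
  refine cellIndex_mem_nearCells hb ?_
  have hφ' := (φ.lipschitzWith_of_opNorm_le (K := 1) (by simpa using hφ)).dist_le_mul
  have hψ' := (ψ.lipschitzWith_of_opNorm_le (K := 1) (by simpa using hψ)).dist_le_mul
  simp only [NNReal.coe_one, one_mul] at hφ' hψ'
  calc _ ≤ dist (φ u) (φ (cellCorner b m (cellIndex b m u))) +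
        dist (ψ v) (ψ (cellCorner b m (cellIndex b m v))) := dist_add_add_le _ _ _ _
    _ ≤ d / (b : ℝ) ^ m + d / (b : ℝ) ^ m :=
        add_le_add ((hφ' _ _).trans (dist_cellCorner_cellIndex_le hb u))
          ((hψ' _ _).trans (dist_cellCorner_cellIndex_le hb v))
    _ = ((2 * d : ℕ) : ℝ) / (b : ℝ) ^ m := by push_cast; ring

end Cells

section CompactSupport

variable {Y Z : Type*} [TopologicalSpace Y] [MeasurableSpace Y] [TopologicalSpace Z]
  [MeasurableSpace Z]

def IsCompactlySupported (μ : Measure Z) : Prop :=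
  ∃ K : Set Z, IsCompact K ∧ μ Kᶜ = 0

lemma IsCompactlySupported.prod {ω : Measure Y} {η : Measure Z} [SFinite η]
    (hω : IsCompactlySupported ω) (hη : IsCompactlySupported η) :
    IsCompactlySupported (ω.prod η) := by
  obtain ⟨K, hK, hK0⟩ := hω
  obtain ⟨L, hL, hL0⟩ := hη
  refine ⟨K ×ˢ L, hK.prod hL, ?_⟩
  rw [Set.compl_prod_eq_union]
  exact measure_union_null (by simp [Measure.prod_prod, hK0]) (by simp [Measure.prod_prod, hL0])

lemma IsCompactlySupported.isFinitePartition_cellIndex [OpensMeasurableSpace Z] {μ : Measure Z}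
    (hμ : IsCompactlySupported μ) {d b : ℕ} (hb : 0 < b) (m : ℕ) (φ : Z → Ed d)
    (hφ : Continuous φ) : IsFinitePartition μ (fun z => cellIndex b m (φ z)) := by
  obtain ⟨K, hK, hK0⟩ := hμ
  obtain ⟨R, hR⟩ := (hK.image hφ).isBounded.subset_closedBall 0
  refine ⟨measurable_cellIndex.comp hφ.measurable, nearCells b m ⌈R * (b : ℝ) ^ m⌉₊ 0, ?_⟩
  filter_upwards [mem_ae_iff.2 hK0] with z hz
  refine cellIndex_mem_nearCells hb ((Metric.mem_closedBall.1 (hR ⟨z, hz, rfl⟩)).trans ?_)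
  rw [le_div_iff₀ (by positivity)]
  exact Nat.le_ceil _

end CompactSupport

section Convolution

variable {d b : ℕ} (m : ℕ) {ω η : Measure (Ed d)} [IsProbabilityMeasure ω]
  [IsProbabilityMeasure η] {π : Ed d →L[ℝ] Ed d}

lemma entropy_proj_le_entropy_proj_conv (hb : 0 < b) (hπ : ‖π‖ ≤ 1)
    (hω : IsCompactlySupported ω) (hη : IsCompactlySupported η) :
    entropy η (fun y => cellIndex b m (π y)) ≤
      entropy (ω.prod η) (fun z => cellIndex b m (π (z.1 + z.2))) +
        Real.log ((2 * (2 * d) + 1) ^ d : ℕ) := by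
  have hfin := (hω.prod hη).isFinitePartition_cellIndex (d := d) hb m
  -- `π y = π (x + y) - π x`
  have hfib := entropy_le_add_log
    (f := fun z : Ed d × Ed d => (cellIndex b m z.1, cellIndex b m (π z.2)))
    (g := fun z => (cellIndex b m (π (z.1 + z.2)), cellIndex b m z.1))
    (s := fun p => {p.2} ×ˢ nearCells b m (2 * d) (cellCorner b m p.1 - π (cellCorner b m p.2)))
    (N := (2 * (2 * d) + 1) ^ d)
    ((hfin (fun z => z.1) continuous_fst).prodMk (hfin (fun z => π z.2) (by fun_prop)))
    ((hfin (fun z => π (z.1 + z.2)) (by fun_prop)).prodMk (hfin (fun z => z.1) continuous_fst))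
    (ae_of_all _ fun z => by
      simpa [map_add, sub_eq_add_neg] using cellIndex_map_add_map_mem_nearCells (m := m) hb
        (ψ := -π) ContinuousLinearMap.norm_id_le (by rwa [norm_neg]) (π (z.1 + z.2)) z.1)
    (fun p => by simp [card_nearCells])
  have hsub := condEntropy_le_entropy (hfin (fun z => π (z.1 + z.2)) (by fun_prop))
    (hfin (fun z => z.1) continuous_fst)
  rw [entropy_prod_prodMk (hω.isFinitePartition_cellIndex hb m (fun x => x) continuous_id)
    (hη.isFinitePartition_cellIndex hb m π π.continuous)] at hfib
  rw [condEntropy, entropy_prod_comp_fst measurable_cellIndex] at hsub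
  linarith

lemma entropy_add_entropy_le_entropy_conv (hb : 0 < b) (hπ : ‖π‖ ≤ 1)
    (hω : IsCompactlySupported ω) (hη : IsCompactlySupported η) :
    entropy ω (fun x => (cellIndex b m x, cellIndex b m (π x))) + entropy η (cellIndex b m) ≤
      entropy (ω.prod η) (fun z =>
        (cellIndex b m (z.1 + z.2), cellIndex b m (π (z.1 + z.2)), cellIndex b m z.2)) +
        2 * Real.log ((2 * (2 * d) + 1) ^ d : ℕ) := by
  have hfin := (hω.prod hη).isFinitePartition_cellIndex (d := d) hb m
  have hid : ‖-ContinuousLinearMap.id ℝ (Ed d)‖ ≤ 1 := by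
    rw [norm_neg]; exact ContinuousLinearMap.norm_id_le
  have hπ' : ‖-π‖ ≤ 1 := by rwa [norm_neg]
  -- `x = (x + y) - y` and `π x = π (x + y) - π y`
  have hfib := entropy_le_add_log
    (f := fun z : Ed d × Ed d => ((cellIndex b m z.1, cellIndex b m (π z.1)), cellIndex b m z.2))
    (g := fun z => (cellIndex b m (z.1 + z.2), cellIndex b m (π (z.1 + z.2)), cellIndex b m z.2))
    (s := fun p => (nearCells b m (2 * d) (cellCorner b m p.1 - cellCorner b m p.2.2) ×ˢ
      nearCells b m (2 * d) (cellCorner b m p.2.1 - π (cellCorner b m p.2.2))) ×ˢ {p.2.2})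
    (N := (2 * (2 * d) + 1) ^ d * (2 * (2 * d) + 1) ^ d)
    (((hfin (fun z => z.1) continuous_fst).prodMk (hfin (fun z => π z.1) (by fun_prop))).prodMk
      (hfin (fun z => z.2) continuous_snd))
    ((hfin (fun z => z.1 + z.2) continuous_add).prodMk
      ((hfin (fun z => π (z.1 + z.2)) (by fun_prop)).prodMk (hfin (fun z => z.2) continuous_snd)))
    (ae_of_all _ fun z => by
      have hx := cellIndex_map_add_map_mem_nearCells (m := m) hb ContinuousLinearMap.norm_id_le
        hid (z.1 + z.2) z.2
      have hπx := cellIndex_map_add_map_mem_nearCells (m := m) hb ContinuousLinearMap.norm_id_le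
        hπ' (π (z.1 + z.2)) z.2
      simp only [ContinuousLinearMap.id_apply, neg_apply, map_add, ← sub_eq_add_neg,
        add_sub_cancel_right] at hx hπx
      simp [hx, hπx])
    (fun p => by simp [card_nearCells])
  rwa [entropy_prod_prodMk ((hω.isFinitePartition_cellIndex hb m (fun x => x) continuous_id).prodMk
    (hω.isFinitePartition_cellIndex hb m π π.continuous))
    (hη.isFinitePartition_cellIndex hb m (fun y => y) continuous_id), Nat.cast_mul,
    Real.log_mul (by positivity) (by positivity), ← two_mul] at hfib

lemma entropy_proj_conv_le (hb : 0 < b) (hπ : ‖π‖ ≤ 1) (hω : IsCompactlySupported ω)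
    (hη : IsCompactlySupported η) :
    entropy (ω.prod η) (fun z => (cellIndex b m (π (z.1 + z.2)), cellIndex b m z.2)) ≤
      entropy ω (fun x => cellIndex b m (π x)) + entropy η (cellIndex b m) +
        Real.log ((2 * (2 * d) + 1) ^ d : ℕ) := by
  have hfin := (hω.prod hη).isFinitePartition_cellIndex (d := d) hb m
  -- `π (x + y) = π x + π y`
  have hfib := entropy_le_add_log
    (f := fun z : Ed d × Ed d => (cellIndex b m (π (z.1 + z.2)), cellIndex b m z.2))
    (g := fun z => (cellIndex b m (π z.1), cellIndex b m z.2))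
    (s := fun p => nearCells b m (2 * d) (cellCorner b m p.1 + π (cellCorner b m p.2)) ×ˢ {p.2})
    (N := (2 * (2 * d) + 1) ^ d)
    ((hfin (fun z => π (z.1 + z.2)) (by fun_prop)).prodMk (hfin (fun z => z.2) continuous_snd))
    ((hfin (fun z => π z.1) (by fun_prop)).prodMk (hfin (fun z => z.2) continuous_snd))
    (ae_of_all _ fun z => by
      simpa [map_add] using cellIndex_map_add_map_mem_nearCells (m := m) hb
        ContinuousLinearMap.norm_id_le hπ (π z.1) z.2)
    (fun p => by simp [card_nearCells])
  rwa [entropy_prod_prodMk (hω.isFinitePartition_cellIndex hb m π π.continuous)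
    (hη.isFinitePartition_cellIndex hb m (fun y => y) continuous_id)] at hfib

lemma entropy_sub_entropy_proj_le_condEntropy_conv (hb : 0 < b) (hπ : ‖π‖ ≤ 1)
    (hω : IsCompactlySupported ω) (hη : IsCompactlySupported η) :
    entropy ω (cellIndex b m) - entropy ω (fun x => cellIndex b m (π x)) -
        3 * Real.log ((2 * (2 * d) + 1) ^ d : ℕ) ≤
      condEntropy (ω.prod η) (fun z => cellIndex b m (z.1 + z.2))
        (fun z => cellIndex b m (π (z.1 + z.2))) := by
  have hfin := (hω.prod hη).isFinitePartition_cellIndex (d := d) hb m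
  have hcond := condEntropy_prodMk_le (hfin (fun z => z.1 + z.2) continuous_add)
    (hfin (fun z => π (z.1 + z.2)) (by fun_prop)) (hfin (fun z => z.2) continuous_snd)
  have hmono := entropy_le_entropy_prodMk
    (hω.isFinitePartition_cellIndex hb m (fun x => x) continuous_id)
    (hω.isFinitePartition_cellIndex hb m π π.continuous)
  have hjoint := entropy_add_entropy_le_entropy_conv m hb hπ hω hη
  have hproj := entropy_proj_conv_le m hb hπ hω hη
  unfold condEntropy at hcond ⊢
  linarith

lemma le_entropy_conv (hb : 0 < b) (hπ : ‖π‖ ≤ 1) (hω : IsCompactlySupported ω)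
    (hη : IsCompactlySupported η) :
    entropy ω (cellIndex b m) + entropy (η.map π) (cellIndex b m) -
        entropy (ω.map π) (cellIndex b m) - 5 * Real.log ((2 * (2 * d) + 1) ^ d : ℕ) ≤
      entropy (ω ∗ η) (cellIndex b m) := by
  have hfin := (hω.prod hη).isFinitePartition_cellIndex (d := d) hb m
  have hST := entropy_le_add_log
    (f := fun z : Ed d × Ed d => (cellIndex b m (z.1 + z.2), cellIndex b m (π (z.1 + z.2))))
    (g := fun z => cellIndex b m (z.1 + z.2))
    (s := fun k => {k} ×ˢ nearCells b m (2 * d) (π (cellCorner b m k)))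
    (N := (2 * (2 * d) + 1) ^ d)
    ((hfin (fun z => z.1 + z.2) continuous_add).prodMk
      (hfin (fun z => π (z.1 + z.2)) (by fun_prop)))
    (hfin (fun z => z.1 + z.2) continuous_add)
    (ae_of_all _ fun z => by
      simpa using cellIndex_map_add_map_mem_nearCells (m := m) hb (ψ := 0) hπ (by simp)
        (z.1 + z.2) (z.1 + z.2))
    (fun k => by simp [card_nearCells])
  have hT := entropy_proj_le_entropy_proj_conv m hb hπ hω hη
  have hSgivenT := entropy_sub_entropy_proj_le_condEntropy_conv m hb hπ hω hη
  rw [Measure.conv, entropy_map continuous_add.measurable measurable_cellIndex,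
    entropy_map π.measurable measurable_cellIndex, entropy_map π.measurable measurable_cellIndex]
  unfold condEntropy at hSgivenT
  linarith

end Convolution

lemma one_div_mul_le_of_ceil_div_le {C ε : ℝ} (hε : 0 < ε) {m : ℕ}
    (hm : ⌈C / ε⌉₊ ≤ m) : 1 / (m : ℝ) * C ≤ ε := by
  rcases Nat.eq_zero_or_pos m with rfl | hm0
  · simpa using hε.le
  have hCm := Nat.ceil_le.1 hm
  rw [div_le_iff₀ hε] at hCm
  rw [one_div_mul_eq_div, div_le_iff₀ (by exact_mod_cast hm0)]
  linarith

lemma projS_eq_starProjection {d : ℕ} (V : Submodule ℝ (Ed d)) : projS V = V.starProjection := rfl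

/-- Saturation transfer: for any `ε > 0` and all sufficiently large `m`, if `ω` is
`(V,ε,m)`-saturated and the convolution `ω ∗ η` gains at most `ε` entropy over `η` at
scale `m`, then `η` is `(V,3ε,m)`-saturated. -/
theorem saturated_transfer (d b : ℕ) (hb : 2 ≤ b) :
    ∀ ε : ℝ, 0 < ε →
      ∃ M : ℕ, ∀ m : ℕ, M ≤ m →
        ∀ ω η : Measure (Ed d), IsProbabilityMeasure ω → IsProbabilityMeasure η →
          (∃ K : Set (Ed d), IsCompact K ∧ ω Kᶜ = 0) →
          (∃ K : Set (Ed d), IsCompact K ∧ η Kᶜ = 0) →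
          ∀ V : Submodule ℝ (Ed d), Saturated d b ω V ε m →
            (1 / (m : ℝ)) * entH d b m (ω ∗ η) ≤ (1 / (m : ℝ)) * entH d b m η + ε →
            Saturated d b η V (3 * ε) m := by
  intro ε hε
  set K := 5 * Real.log ((2 * (2 * d) + 1) ^ d : ℕ)
  have hK : 0 ≤ K := mul_nonneg (by norm_num) (Real.log_natCast_nonneg _)
  refine ⟨⌈K / Real.log 2 / ε⌉₊, fun m hm ω η _ _ hω hη V hsat hconv => ?_⟩
  have hb0 : 0 < b := by omega
  have hlog2 : 0 < Real.log 2 := Real.log_pos one_lt_two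
  have hlogb : Real.log 2 ≤ Real.log b := Real.log_le_log two_pos (by exact_mod_cast hb)
  have hloss : 1 / (m : ℝ) * (K / Real.log b) ≤ ε :=
    (mul_le_mul_of_nonneg_left (div_le_div_of_nonneg_left hK hlog2 hlogb) (by positivity)).trans
      (one_div_mul_le_of_ceil_div_le hε hm)
  have hentropy := le_entropy_conv m hb0 Vᗮ.starProjection_norm_le hω hη
  have hentH := mul_le_mul_of_nonneg_left
    (div_le_div_of_nonneg_right hentropy (hlog2.trans_le hlogb).le)
    (one_div_nonneg.2 m.cast_nonneg)
  unfold Saturated at hsat ⊢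
  rw [projS_eq_starProjection] at hsat ⊢
  simp only [entH_eq_entropy hb0] at hsat hconv ⊢
  rw [sub_div, sub_div, add_div, mul_sub, mul_sub, mul_add] at hentH
  linarith

end Weier
end
end
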